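/- arXiv:quant-ph/0012127 — 7 statements merged into one kernel-verified Lean document; each statement's English description precedes it below -/
import Mathlib

section
/- Let Γ = (𝒱, ℰ) be an e-uniform hypergraph (every edge E ∈ ℰ has cardinality e), let P be a probability distribution on ℰ, and define the probability distribution Q on 𝒱 by Q(v) = ∑_{E∈ℰ} P(E)·(1/e)·1_E(v). Fix ε, τ > 0. Then there exist a set of vertices 𝒱₀ ⊆ 𝒱 and edges E₁, …, E_L ∈ ℰ such that, with Q̄(v) = (1/L)∑_{i=1}^{L} (1/e)·1_{E_i}(v), one has: Q(𝒱₀) ≤ τ; for all v ∈ 𝒱 \ 𝒱₀, (1−ε)Q(v) ≤ Q̄(v) ≤ (1+ε)Q(v); and L ≤ 1 + (|𝒱|/e)·(2 ln 2 · log(2|𝒱|))/(ε²τ). -/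
open scoped BigOperators
open ComplexOrder
open scoped Matrix

private lemma auxA {α : Type*} [Fintype α] [DecidableEq α] {L : ℕ} (f : Fin L → α → ℝ) :
    ∑ ω : Fin L → α, ∏ i, f i (ω i) = ∏ i, ∑ a, f i a := by
  rw [Finset.prod_univ_sum, Fintype.piFinset_univ]

private lemma auxB {α : Type*} [Fintype α] [DecidableEq α] {L : ℕ}
    (w : α → ℝ) (hw1 : ∑ a, w a = 1) (Y : α → ℝ) (hY : ∑ a, w a * Y a = 0) :
    ∑ ω : Fin L → α, (∏ i, w (ω i)) * (∑ i, Y (ω i)) ^ 2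
      = L * ∑ a, w a * Y a ^ 2 := by
  classical
  have key : ∀ i j : Fin L,
      ∑ ω : Fin L → α, (∏ k, w (ω k)) * (Y (ω i) * Y (ω j))
        = if i = j then ∑ a, w a * Y a ^ 2 else 0 := by
    intro i j
    by_cases hij : i = j
    · subst hij
      rw [if_pos rfl]
      have h1 : ∀ ω : Fin L → α,
          (∏ k, w (ω k)) * (Y (ω i) * Y (ω i))
            = ∏ k, (w (ω k) * (if k = i then Y (ω k) ^ 2 else 1)) := by
        intro ω
        rw [Finset.prod_mul_distrib]
        congr 1
        rw [Finset.prod_ite_eq' Finset.univ i (fun k => Y (ω k) ^ 2)]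
        simp [sq]
      rw [Finset.sum_congr rfl (fun ω _ => h1 ω),
        auxA (fun k a => w a * (if k = i then Y a ^ 2 else 1))]
      have h2 : ∀ k : Fin L, ∑ a, w a * (if k = i then Y a ^ 2 else 1)
          = if k = i then (∑ a, w a * Y a ^ 2) else 1 := by
        intro k
        by_cases h : k = i <;> simp [h, hw1]
      rw [Finset.prod_congr rfl (fun k _ => h2 k)]
      rw [Finset.prod_ite_eq' Finset.univ i (fun _ => ∑ a, w a * Y a ^ 2)]
      simp
    · rw [if_neg hij]
      have h1 : ∀ ω : Fin L → α,
          (∏ k, w (ω k)) * (Y (ω i) * Y (ω j))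
            = ∏ k, (w (ω k) * (if k = i then Y (ω k) else if k = j then Y (ω k) else 1)) := by
        intro ω
        rw [Finset.prod_mul_distrib]
        congr 1
        have hsub : ∀ x ∈ Finset.univ, x ∉ ({i, j} : Finset (Fin L)) →
            (if x = i then Y (ω x) else if x = j then Y (ω x) else 1) = 1 := by
          intro x _ hx
          simp only [Finset.mem_insert, Finset.mem_singleton] at hx
          push_neg at hx
          simp [hx.1, hx.2]
        rw [← Finset.prod_subset (Finset.subset_univ ({i, j} : Finset (Fin L))) hsub,
          Finset.prod_pair hij]
        simp [Ne.symm hij]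
      rw [Finset.sum_congr rfl (fun ω _ => h1 ω),
        auxA (fun k a => w a * (if k = i then Y a else if k = j then Y a else 1))]
      apply Finset.prod_eq_zero (Finset.mem_univ i)
      simpa using hY
  calc ∑ ω : Fin L → α, (∏ i, w (ω i)) * (∑ i, Y (ω i)) ^ 2
      = ∑ ω : Fin L → α, ∑ i, ∑ j, (∏ k, w (ω k)) * (Y (ω i) * Y (ω j)) := by
        apply Finset.sum_congr rfl; intro ω _
        rw [sq, Finset.sum_mul_sum, Finset.mul_sum]
        apply Finset.sum_congr rfl; intro i _; rw [Finset.mul_sum]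
    _ = ∑ i, ∑ j, ∑ ω : Fin L → α, (∏ k, w (ω k)) * (Y (ω i) * Y (ω j)) := by
        rw [Finset.sum_comm]
        apply Finset.sum_congr rfl; intro i _
        rw [Finset.sum_comm]
    _ = ∑ i : Fin L, ∑ j : Fin L, if i = j then ∑ a, w a * Y a ^ 2 else 0 := by
        exact Finset.sum_congr rfl fun i _ => Finset.sum_congr rfl fun j _ => key i j
    _ = ∑ _i : Fin L, ∑ a, w a * Y a ^ 2 := by
        apply Finset.sum_congr rfl; intro i _
        simp
    _ = L * ∑ a, w a * Y a ^ 2 := by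
        rw [Finset.sum_const, Finset.card_univ, Fintype.card_fin, nsmul_eq_mul]

private lemma auxC {α V : Type*} [Fintype α] [DecidableEq α] [Fintype V]
    {L : ℕ} (hL : 0 < L)
    (w : α → ℝ) (hw0 : ∀ a, 0 ≤ w a) (hw1 : ∑ a, w a = 1)
    (X : V → α → ℝ) (Q : V → ℝ) (hQdef : ∀ v, ∑ a, w a * X v a = Q v)
    (hQ0 : ∀ v, 0 ≤ Q v)
    (r : ℝ) (hr : 0 < r) (hX2 : ∀ v, ∑ a, w a * X v a ^ 2 ≤ r * Q v)
    (ε τ : ℝ) (hε : 0 < ε)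
    (hτ : (Fintype.card V : ℝ) * r / (L * ε ^ 2) ≤ τ) :
    ∃ ω : Fin L → α, ∃ V₀ : Finset V,
      (∀ v ∉ V₀, |(L:ℝ)⁻¹ * (∑ i, X v (ω i)) - Q v| ≤ ε * Q v) ∧
      ∑ v ∈ V₀, Q v ≤ τ := by
  classical
  have hL0 : ((L:ℝ)) ≠ 0 := Nat.cast_ne_zero.mpr hL.ne'
  have hLpos : (0:ℝ) < L := Nat.cast_pos.mpr hL
  have hne : Nonempty α := by
    by_contra h
    have : IsEmpty α := not_nonempty_iff.mp h
    rw [Finset.univ_eq_empty, Finset.sum_empty] at hw1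
    exact one_ne_zero hw1.symm
  -- deviation rewrite
  have hDev : ∀ (v : V) (ω : Fin L → α),
      (L:ℝ)⁻¹ * (∑ i, X v (ω i)) - Q v = (L:ℝ)⁻¹ * ∑ i, (X v (ω i) - Q v) := by
    intro v ω
    rw [Finset.sum_sub_distrib, Finset.sum_const, Finset.card_univ, Fintype.card_fin,
      nsmul_eq_mul, mul_sub, inv_mul_cancel_left₀ hL0]
  -- centered sums
  have hY0 : ∀ v : V, ∑ a, w a * (X v a - Q v) = 0 := by
    intro v
    simp only [mul_sub]
    rw [Finset.sum_sub_distrib, ← Finset.sum_mul, hw1, hQdef v]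
    ring
  have hV2 : ∀ v : V, ∑ a, w a * (X v a - Q v) ^ 2 ≤ r * Q v := by
    intro v
    have h1 : ∑ a, w a * (X v a - Q v) ^ 2
        = (∑ a, w a * X v a ^ 2) - 2 * Q v * (∑ a, w a * X v a)
            + Q v ^ 2 * (∑ a, w a) := by
      rw [Finset.mul_sum, Finset.mul_sum, ← Finset.sum_sub_distrib, ← Finset.sum_add_distrib]
      apply Finset.sum_congr rfl; intro a _; ring
    rw [h1, hQdef v, hw1]
    nlinarith [hX2 v, sq_nonneg (Q v)]
  have hM : ∀ v : V, ∑ ω : Fin L → α, (∏ i, w (ω i)) * (∑ i, (X v (ω i) - Q v)) ^ 2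
      = L * ∑ a, w a * (X v a - Q v) ^ 2 :=
    fun v => auxB w hw1 (fun a => X v a - Q v) (hY0 v)
  have hW0 : ∀ ω : Fin L → α, 0 ≤ ∏ i, w (ω i) :=
    fun ω => Finset.prod_nonneg fun i _ => hw0 (ω i)
  have hW1 : ∑ ω : Fin L → α, ∏ i, w (ω i) = 1 := by
    rw [auxA (fun _ a => w a)]
    simp [hw1]
  -- per-vertex Chebyshev bound
  have hv : ∀ v : V,
      ∑ ω : Fin L → α, (∏ i, w (ω i)) *
        (if ε * Q v < |(L:ℝ)⁻¹ * (∑ i, X v (ω i)) - Q v| then Q v else 0)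
      ≤ r / ((L:ℝ) * ε ^ 2) := by
    intro v
    by_cases hQv : Q v = 0
    · have : ∀ ω : Fin L → α, (∏ i, w (ω i)) *
          (if ε * Q v < |(L:ℝ)⁻¹ * (∑ i, X v (ω i)) - Q v| then Q v else 0) = 0 := by
        intro ω; rw [hQv]; simp
      rw [Finset.sum_congr rfl (fun ω _ => this ω)]
      simp only [Finset.sum_const_zero]
      positivity
    · have hQvpos : 0 < Q v := (hQ0 v).lt_of_ne (Ne.symm hQv)
      set c : ℝ := Q v / ((L:ℝ) * ε * Q v) ^ 2 with hc
      have hc0 : 0 ≤ c := by positivity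
      have hstep : ∀ ω : Fin L → α, (∏ i, w (ω i)) *
          (if ε * Q v < |(L:ℝ)⁻¹ * (∑ i, X v (ω i)) - Q v| then Q v else 0)
          ≤ (∏ i, w (ω i)) * ((∑ i, (X v (ω i) - Q v)) ^ 2 * c) := by
        intro ω
        by_cases hb : ε * Q v < |(L:ℝ)⁻¹ * (∑ i, X v (ω i)) - Q v|
        · rw [if_pos hb]
          apply mul_le_mul_of_nonneg_left _ (hW0 ω)
          rw [hDev v ω] at hb
          have habs : (ε * Q v) * L < |∑ i, (X v (ω i) - Q v)| := by
            rw [abs_mul, abs_inv, Nat.abs_cast, inv_mul_eq_div] at hb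
            exact (lt_div_iff₀ hLpos).mp hb
          have h2 : ((L:ℝ) * ε * Q v) ^ 2 ≤ (∑ i, (X v (ω i) - Q v)) ^ 2 := by
            have hnn : 0 ≤ ε * Q v * (L:ℝ) := by positivity
            have h2' := mul_self_le_mul_self hnn habs.le
            calc ((L:ℝ) * ε * Q v) ^ 2 = (ε * Q v * (L:ℝ)) * (ε * Q v * (L:ℝ)) := by ring
              _ ≤ |∑ i, (X v (ω i) - Q v)| * |∑ i, (X v (ω i) - Q v)| := h2'
              _ = (∑ i, (X v (ω i) - Q v)) ^ 2 := by rw [abs_mul_abs_self]; ring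
          calc Q v = ((L:ℝ) * ε * Q v) ^ 2 * c := by
                rw [hc]; field_simp
            _ ≤ (∑ i, (X v (ω i) - Q v)) ^ 2 * c :=
                mul_le_mul_of_nonneg_right h2 hc0
        · rw [if_neg hb]
          have := hW0 ω
          have h3 : (0:ℝ) ≤ (∑ i, (X v (ω i) - Q v)) ^ 2 * c := by positivity
          nlinarith
      calc ∑ ω : Fin L → α, (∏ i, w (ω i)) *
            (if ε * Q v < |(L:ℝ)⁻¹ * (∑ i, X v (ω i)) - Q v| then Q v else 0)
          ≤ ∑ ω : Fin L → α, (∏ i, w (ω i)) * ((∑ i, (X v (ω i) - Q v)) ^ 2 * c) :=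
            Finset.sum_le_sum fun ω _ => hstep ω
        _ = (∑ ω : Fin L → α, (∏ i, w (ω i)) * (∑ i, (X v (ω i) - Q v)) ^ 2) * c := by
            rw [Finset.sum_mul]
            exact Finset.sum_congr rfl fun ω _ => (mul_assoc _ _ _).symm
        _ = ((L:ℝ) * ∑ a, w a * (X v a - Q v) ^ 2) * c := by rw [hM v]
        _ ≤ ((L:ℝ) * (r * Q v)) * c := by
            apply mul_le_mul_of_nonneg_right _ hc0
            exact mul_le_mul_of_nonneg_left (hV2 v) hLpos.le
        _ = r / ((L:ℝ) * ε ^ 2) := by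
            rw [hc]; field_simp
  -- expectation of bad mass
  have hexp : ∑ ω : Fin L → α, (∏ i, w (ω i)) *
      (∑ v ∈ Finset.univ.filter
        (fun v => ε * Q v < |(L:ℝ)⁻¹ * (∑ i, X v (ω i)) - Q v|), Q v) ≤ τ := by
    calc ∑ ω : Fin L → α, (∏ i, w (ω i)) *
          (∑ v ∈ Finset.univ.filter
            (fun v => ε * Q v < |(L:ℝ)⁻¹ * (∑ i, X v (ω i)) - Q v|), Q v)
        = ∑ ω : Fin L → α, ∑ v : V, (∏ i, w (ω i)) *
            (if ε * Q v < |(L:ℝ)⁻¹ * (∑ i, X v (ω i)) - Q v| then Q v else 0) := by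
          apply Finset.sum_congr rfl; intro ω _
          rw [Finset.sum_filter, Finset.mul_sum]
      _ = ∑ v : V, ∑ ω : Fin L → α, (∏ i, w (ω i)) *
            (if ε * Q v < |(L:ℝ)⁻¹ * (∑ i, X v (ω i)) - Q v| then Q v else 0) :=
          Finset.sum_comm
      _ ≤ ∑ _v : V, r / ((L:ℝ) * ε ^ 2) := Finset.sum_le_sum fun v _ => hv v
      _ = (Fintype.card V : ℝ) * r / ((L:ℝ) * ε ^ 2) := by
          rw [Finset.sum_const, Finset.card_univ, nsmul_eq_mul, mul_div_assoc]
      _ ≤ τ := hτ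
  -- pick a good sample
  obtain ⟨ω, hω⟩ : ∃ ω : Fin L → α,
      (∑ v ∈ Finset.univ.filter
        (fun v => ε * Q v < |(L:ℝ)⁻¹ * (∑ i, X v (ω i)) - Q v|), Q v) ≤ τ := by
    by_contra h
    push_neg at h
    obtain ⟨ω₁, hω₁⟩ : ∃ ω : Fin L → α, 0 < ∏ i, w (ω i) := by
      by_contra h2
      push_neg at h2
      have : ∑ ω : Fin L → α, ∏ i, w (ω i) ≤ 0 :=
        Finset.sum_nonpos fun ω _ => h2 ω
      linarith [hW1]
    have hlt : τ < ∑ ω : Fin L → α, (∏ i, w (ω i)) *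
        (∑ v ∈ Finset.univ.filter
          (fun v => ε * Q v < |(L:ℝ)⁻¹ * (∑ i, X v (ω i)) - Q v|), Q v) := by
      have h4 : ∑ ω : Fin L → α, (∏ i, w (ω i)) * τ = τ := by
        rw [← Finset.sum_mul, hW1, one_mul]
      rw [← h4]
      apply Finset.sum_lt_sum
      · intro ω _
        exact mul_le_mul_of_nonneg_left (h ω).le (hW0 ω)
      · exact ⟨ω₁, Finset.mem_univ ω₁, mul_lt_mul_of_pos_left (h ω₁) hω₁⟩
    linarith
  refine ⟨ω, Finset.univ.filter
    (fun v => ε * Q v < |(L:ℝ)⁻¹ * (∑ i, X v (ω i)) - Q v|), ?_, hω⟩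
  intro v hv
  simp only [Finset.mem_filter, Finset.mem_univ, true_and, not_lt] at hv
  exact hv

theorem stmt5 {V : Type*} [Fintype V] [DecidableEq V]
    (ℰ : Finset (Finset V)) (e : ℕ) (he : 0 < e) (hunif : ∀ E ∈ ℰ, E.card = e)
    (P : Finset V → ℝ) (hP0 : ∀ E, 0 ≤ P E) (hP1 : ∑ E ∈ ℰ, P E = 1)
    (Q : V → ℝ) (hQ : ∀ v, Q v = ∑ E ∈ ℰ, P E * ((e:ℝ)⁻¹ * if v ∈ E then 1 else 0))
    (ε τ : ℝ) (hε : 0 < ε) (hτ : 0 < τ) :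
    ∃ (V₀ : Finset V) (L : ℕ) (sel : Fin L → Finset V),
      0 < L ∧ (∀ i, sel i ∈ ℰ) ∧
      (∑ v ∈ V₀, Q v ≤ τ) ∧
      (∀ v ∉ V₀,
        (1 - ε) * Q v ≤ (L:ℝ)⁻¹ * ∑ i, ((e:ℝ)⁻¹ * if v ∈ sel i then 1 else 0) ∧
        (L:ℝ)⁻¹ * ∑ i, ((e:ℝ)⁻¹ * if v ∈ sel i then 1 else 0) ≤ (1 + ε) * Q v) ∧
      (L:ℝ) ≤ 1 + ((Fintype.card V : ℝ) / e) *
        (2 * Real.log 2 * Real.logb 2 (2 * Fintype.card V)) / (ε^2 * τ) := by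
  classical
  have he' : (0:ℝ) < e := Nat.cast_pos.mpr he
  -- V is nonempty
  have hEne : ℰ.Nonempty := by
    by_contra h
    rw [Finset.not_nonempty_iff_eq_empty] at h
    rw [h, Finset.sum_empty] at hP1
    exact one_ne_zero hP1.symm
  obtain ⟨E₀, hE₀⟩ := hEne
  have hE₀ne : E₀.Nonempty := Finset.card_pos.mp (by rw [hunif E₀ hE₀]; exact he)
  have hVne : Nonempty V := ⟨hE₀ne.choose⟩
  set n : ℕ := Fintype.card V with hn
  have hn1 : 1 ≤ n := Fintype.card_pos_iff.mpr hVne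
  have hn' : (0:ℝ) < n := by exact_mod_cast Nat.lt_of_lt_of_le Nat.zero_lt_one hn1
  -- choose L
  set cq : ℝ := (n:ℝ) / (e * ε ^ 2 * τ) with hcq
  have hcqpos : 0 < cq := by positivity
  set L : ℕ := max 1 ⌈cq⌉₊ with hLdef
  have hL : 0 < L := lt_of_lt_of_le Nat.zero_lt_one (le_max_left _ _)
  have hLge : cq ≤ (L:ℝ) := le_trans (Nat.le_ceil cq)
    (Nat.cast_le.mpr (le_max_right 1 ⌈cq⌉₊))
  -- probability data
  have hQ0 : ∀ v, 0 ≤ Q v := by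
    intro v
    rw [hQ v]
    apply Finset.sum_nonneg
    intro E _
    apply mul_nonneg (hP0 E)
    apply mul_nonneg (by positivity)
    split <;> norm_num
  have hw1 : ∑ a : {x // x ∈ ℰ}, P (a:Finset V) = 1 := by
    rw [Finset.sum_coe_sort]; exact hP1
  have hQdef : ∀ v, ∑ a : {x // x ∈ ℰ},
      P (a:Finset V) * ((e:ℝ)⁻¹ * if v ∈ (a:Finset V) then 1 else 0) = Q v := by
    intro v
    rw [Finset.sum_coe_sort ℰ (fun E => P E * ((e:ℝ)⁻¹ * if v ∈ E then 1 else 0))]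
    exact (hQ v).symm
  have hX2 : ∀ v, ∑ a : {x // x ∈ ℰ},
      P (a:Finset V) * ((e:ℝ)⁻¹ * if v ∈ (a:Finset V) then (1:ℝ) else 0) ^ 2
      ≤ (e:ℝ)⁻¹ * Q v := by
    intro v
    have : ∀ a : {x // x ∈ ℰ},
        P (a:Finset V) * ((e:ℝ)⁻¹ * if v ∈ (a:Finset V) then (1:ℝ) else 0) ^ 2
        = (e:ℝ)⁻¹ * (P (a:Finset V) * ((e:ℝ)⁻¹ * if v ∈ (a:Finset V) then (1:ℝ) else 0)) := by
      intro a
      split_ifs <;> ring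
    rw [Finset.sum_congr rfl (fun a _ => this a), ← Finset.mul_sum, hQdef v]
  have hτ' : (n:ℝ) * (e:ℝ)⁻¹ / ((L:ℝ) * ε ^ 2) ≤ τ := by
    have hLpos : (0:ℝ) < L := Nat.cast_pos.mpr hL
    rw [div_le_iff₀ (by positivity)]
    rw [hcq, div_le_iff₀ (by positivity)] at hLge
    have hee : (e:ℝ) * (e:ℝ)⁻¹ = 1 := mul_inv_cancel₀ (ne_of_gt he')
    nlinarith [hLge, mul_pos hLpos (mul_pos (pow_pos hε 2) hτ)]
  obtain ⟨ω, V₀, happrox, hmass⟩ :=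
    auxC (α := {x // x ∈ ℰ}) (V := V) hL
      (fun a => P (a:Finset V)) (fun a => hP0 _) hw1
      (fun v a => (e:ℝ)⁻¹ * if v ∈ (a:Finset V) then 1 else 0) Q hQdef hQ0
      ((e:ℝ)⁻¹) (by positivity) hX2 ε τ hε hτ'
  refine ⟨V₀, L, fun i => (ω i : Finset V), hL, fun i => (ω i).2, hmass, ?_, ?_⟩
  · intro v hv
    have h := happrox v hv
    rw [abs_le] at h
    constructor
    · have : (1 - ε) * Q v = Q v - ε * Q v := by ring
      rw [this]; linarith [h.1]
    · have : (1 + ε) * Q v = Q v + ε * Q v := by ring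
      rw [this]; linarith [h.2]
  · -- bound on L
    have hlog2 : Real.log 2 ≠ 0 := ne_of_gt (Real.log_pos one_lt_two)
    have hlogb : 2 * Real.log 2 * Real.logb 2 (2 * (n:ℝ)) = 2 * Real.log (2 * (n:ℝ)) := by
      rw [Real.logb]
      field_simp
    have hn1' : (1:ℝ) ≤ (n:ℝ) := by exact_mod_cast hn1
    have h2n : (2:ℝ) ≤ 2 * (n:ℝ) := by linarith
    have hloggrow : Real.log 2 ≤ Real.log (2 * (n:ℝ)) :=
      Real.log_le_log (by norm_num) h2n
    have h2ln : 1 ≤ 2 * Real.log (2 * (n:ℝ)) := by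
      nlinarith [Real.log_two_gt_d9]
    have hLle : (L:ℝ) ≤ cq + 1 := by
      have hceil : L = ⌈cq⌉₊ := max_eq_right (Nat.one_le_ceil_iff.mpr hcqpos)
      rw [hceil]
      exact (Nat.ceil_lt_add_one hcqpos.le).le
    have hrhs : 1 + ((n:ℝ) / e) * (2 * Real.log 2 * Real.logb 2 (2 * (n:ℝ))) / (ε^2 * τ)
        = 1 + cq * (2 * Real.log (2 * (n:ℝ))) := by
      rw [hlogb, hcq]
      field_simp
    calc (L:ℝ) ≤ cq + 1 := hLle
      _ ≤ 1 + cq * (2 * Real.log (2 * (n:ℝ))) := by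
          nlinarith [le_mul_of_one_le_right hcqpos.le h2ln]
      _ = 1 + ((n:ℝ) / e) * (2 * Real.log 2 * Real.logb 2 (2 * (n:ℝ))) / (ε^2 * τ) :=
          hrhs.symm
end

section
/- Let (𝒱, ℰ) be a quantum hypergraph with E ≤ η𝟙 and Tr E = q for all E ∈ ℰ, where q ≤ 1, let P be a probability distribution on ℰ, ρ = ∑_{E∈ℰ} P(E)·E, and fix ε, τ > 0. Then there exist E₁, …, E_L ∈ ℰ with L ≤ 1 + η·(dim 𝒱)·(2 ln 2 · log(2 dim 𝒱))/(ε²τ) such that ρ̄ = (1/L)∑_{i=1}^{L} E_i satisfies ‖ρ − ρ̄‖₁ ≤ (ε + τ) + √(8(ε + τ)). -/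
open scoped BigOperators
open ComplexOrder
open scoped Matrix

def IsProbDist {α : Type*} [Fintype α] (P : α → ℝ) : Prop :=
  (∀ a, 0 ≤ P a) ∧ ∑ a, P a = 1

/-- The positive semidefinite square root (as in the older Mathlib, where it has since been removed). -/
noncomputable def Matrix.PosSemidef.sqrt {n 𝕜 : Type*} [Fintype n] [RCLike 𝕜] [DecidableEq n]
    {A : Matrix n n 𝕜} (hA : A.PosSemidef) : Matrix n n 𝕜 :=
  (hA.isHermitian.eigenvectorUnitary : Matrix n n 𝕜) *
    Matrix.diagonal ((↑) ∘ (√·) ∘ hA.isHermitian.eigenvalues) *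
    (star hA.isHermitian.eigenvectorUnitary : Matrix n n 𝕜)

/-- Trace norm ‖A‖₁ = Tr √(AᴴA). -/
noncomputable def traceNorm {m : Type*} [Fintype m] [DecidableEq m]
    (A : Matrix m m ℂ) : ℝ :=
  (Matrix.posSemidef_conjTranspose_mul_self A).sqrt.trace.re

/-! Sample `L` edges greedily, each time the one keeping the accumulated deviation
`∑ₖ (E_{iₖ} - ρ)` smallest in Frobenius norm. Averaged over `P`, adding a sample raises the squared
norm by at most the variance `∑ P i ‖E i - ρ‖² ≤ ∑ P i ‖E i‖² ≤ η q`, so some choice does as well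
(Maurey's empirical method), and `‖ρ - ρ̄‖₂² ≤ η q / L`. Cauchy–Schwarz on the eigenvalues gives
`‖X‖₁² ≤ d ‖X‖₂²`, and `L ≈ η d / (8 (ε + τ))` makes the error at most `√(8 (ε + τ))`; this `L`
is within the claimed size because `2 ln 2 · log(2d) ≥ 1` and `ε < 1/2`. When
`ε + τ ≥ 1/2` a single edge already suffices, since `‖ρ - E‖₁ ≤ Tr ρ + Tr E ≤ 2`. -/

section Maurey

variable {ι : Type*} [Fintype ι] {P : ι → ℝ}

lemma IsProbDist.nonempty (hP : IsProbDist P) : Nonempty ι := by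
  by_contra h
  rw [not_nonempty_iff] at h
  simpa using hP.2

lemma IsProbDist.exists_le_sum_mul (hP : IsProbDist P) (f : ι → ℝ) :
    ∃ i, f i ≤ ∑ j, P j * f j := by
  have := hP.nonempty
  obtain ⟨i, -, hi⟩ := Finset.exists_min_image Finset.univ f Finset.univ_nonempty
  refine ⟨i, ?_⟩
  calc f i = ∑ j, P j * f i := by rw [← Finset.sum_mul, hP.2, one_mul]
    _ ≤ ∑ j, P j * f j :=
      Finset.sum_le_sum fun j _ => mul_le_mul_of_nonneg_left (hi j (Finset.mem_univ j)) (hP.1 j)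

variable {𝕜 F : Type*} [RCLike 𝕜] [NormedAddCommGroup F] [InnerProductSpace 𝕜 F]

lemma IsProbDist.sum_mul_norm_add_sq (hP : IsProbDist P) {y : ι → F}
    (hy : ∑ i, (P i : 𝕜) • y i = 0) (S : F) :
    ∑ i, P i * ‖S + y i‖ ^ 2 = ‖S‖ ^ 2 + ∑ i, P i * ‖y i‖ ^ 2 := by
  have hinner : ∑ i, P i * RCLike.re (inner 𝕜 S (y i)) = 0 := by
    simpa [inner_sum, inner_smul_right, RCLike.re_ofReal_mul] using
      congrArg (fun z => RCLike.re (inner 𝕜 S z)) hy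
  simp only [norm_add_sq (𝕜 := 𝕜), mul_add, Finset.sum_add_distrib, ← Finset.sum_mul, hP.2]
  rw [Finset.sum_congr rfl fun i _ => mul_left_comm (P i) 2 _, ← Finset.mul_sum, hinner]
  ring

lemma IsProbDist.exists_norm_add_sq_le (hP : IsProbDist P) {y : ι → F}
    (hy : ∑ i, (P i : 𝕜) • y i = 0) (S : F) :
    ∃ j, ‖S + y j‖ ^ 2 ≤ ‖S‖ ^ 2 + ∑ i, P i * ‖y i‖ ^ 2 :=
  hP.sum_mul_norm_add_sq hy S ▸ hP.exists_le_sum_mul _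

lemma IsProbDist.exists_norm_sum_sq_le (hP : IsProbDist P) {y : ι → F}
    (hy : ∑ i, (P i : 𝕜) • y i = 0) (L : ℕ) :
    ∃ sel : Fin L → ι, ‖∑ k, y (sel k)‖ ^ 2 ≤ L * ∑ i, P i * ‖y i‖ ^ 2 := by
  induction L with
  | zero => exact ⟨Fin.elim0, by simp⟩
  | succ L ih =>
    obtain ⟨sel, hsel⟩ := ih
    obtain ⟨j, hj⟩ := hP.exists_norm_add_sq_le hy (∑ k, y (sel k))
    refine ⟨Fin.cons j sel, ?_⟩
    simp only [Fin.sum_univ_succ, Fin.cons_zero, Fin.cons_succ, add_comm (y j)] at hj ⊢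
    push_cast
    linarith

lemma IsProbDist.sum_mul_norm_sub_sq_le (hP : IsProbDist P) (x : ι → F) :
    ∑ i, P i * ‖x i - ∑ j, (P j : 𝕜) • x j‖ ^ 2 ≤ ∑ i, P i * ‖x i‖ ^ 2 := by
  set m := ∑ j, (P j : 𝕜) • x j
  have hinner : ∑ i, P i * RCLike.re (inner 𝕜 (x i) m) = ‖m‖ ^ 2 := by
    have key : ∀ z, RCLike.re (inner 𝕜 m z) = ∑ i, P i * RCLike.re (inner 𝕜 (x i) z) :=
      fun z => by simp [m, sum_inner, inner_smul_left]
    rw [← key, inner_self_eq_norm_sq]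
  simp only [norm_sub_sq (𝕜 := 𝕜), mul_add, mul_sub, Finset.sum_add_distrib,
    Finset.sum_sub_distrib, ← Finset.sum_mul, hP.2]
  rw [Finset.sum_congr rfl fun i _ => mul_left_comm (P i) 2 _, ← Finset.mul_sum, hinner]
  nlinarith [sq_nonneg ‖m‖]

theorem IsProbDist.exists_norm_sub_average_sq_le (hP : IsProbDist P) (x : ι → F) {R : ℝ}
    (hR : ∀ i, ‖x i‖ ^ 2 ≤ R) {L : ℕ} (hL : 0 < L) :
    ∃ sel : Fin L → ι,
      ‖∑ i, (P i : 𝕜) • x i - (L : 𝕜)⁻¹ • ∑ k, x (sel k)‖ ^ 2 ≤ R / L := by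
  set m := ∑ i, (P i : 𝕜) • x i
  have hy : ∑ i, (P i : 𝕜) • (x i - m) = 0 := by
    have hP1 : ∑ i, (P i : 𝕜) = 1 := by exact_mod_cast hP.2
    simp only [smul_sub, Finset.sum_sub_distrib, ← Finset.sum_smul, hP1, one_smul]
    exact sub_self m
  have hvar : ∑ i, P i * ‖x i - m‖ ^ 2 ≤ R := by
    refine (hP.sum_mul_norm_sub_sq_le x).trans ?_
    calc ∑ i, P i * ‖x i‖ ^ 2 ≤ ∑ i, P i * R :=
          Finset.sum_le_sum fun i _ => mul_le_mul_of_nonneg_left (hR i) (hP.1 i)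
      _ = R := by rw [← Finset.sum_mul, hP.2, one_mul]
  obtain ⟨sel, hsel⟩ := hP.exists_norm_sum_sq_le hy L
  refine ⟨sel, ?_⟩
  have hL0 : (L : 𝕜) ≠ 0 := Nat.cast_ne_zero.2 hL.ne'
  have hdiff : m - (L : 𝕜)⁻¹ • ∑ k, x (sel k) = -(L : 𝕜)⁻¹ • ∑ k, (x (sel k) - m) := by
    rw [Finset.sum_sub_distrib, Finset.sum_const, Finset.card_univ, Fintype.card_fin,
      ← Nat.cast_smul_eq_nsmul 𝕜, smul_sub, smul_smul, neg_mul, inv_mul_cancel₀ hL0, neg_smul,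
      neg_smul, one_smul]
    abel
  rw [hdiff, norm_smul, mul_pow]
  calc ‖-(L : 𝕜)⁻¹‖ ^ 2 * ‖∑ k, (x (sel k) - m)‖ ^ 2
      ≤ ((L : ℝ)⁻¹) ^ 2 * (L * ∑ i, P i * ‖x i - m‖ ^ 2) := by
        rw [norm_neg, norm_inv, RCLike.norm_natCast]
        gcongr
    _ = (∑ i, P i * ‖x i - m‖ ^ 2) / L := by field_simp
    _ ≤ R / L := by gcongr

end Maurey

section Frobenius

variable {𝕜 m n : Type*} [RCLike 𝕜] [Fintype m] [Fintype n]

noncomputable def Matrix.frobeniusVec : Matrix m n 𝕜 →ₗ[𝕜] EuclideanSpace 𝕜 (m × n) where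
  toFun A := WithLp.toLp 2 fun p => A p.1 p.2
  map_add' _ _ := rfl
  map_smul' _ _ := rfl

lemma Matrix.norm_frobeniusVec_sq (A : Matrix m n 𝕜) :
    ‖A.frobeniusVec‖ ^ 2 = RCLike.re (Aᴴ * A).trace := by
  rw [EuclideanSpace.norm_sq_eq, Fintype.sum_prod_type, Finset.sum_comm, Matrix.trace, map_sum]
  refine Finset.sum_congr rfl fun j _ => ?_
  simp only [Matrix.diag_apply, Matrix.mul_apply, Matrix.conjTranspose_apply, map_sum,
    RCLike.star_def, RCLike.conj_mul]
  refine Finset.sum_congr rfl fun i _ => ?_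
  rw [← RCLike.ofReal_pow, RCLike.ofReal_re]
  rfl

end Frobenius

lemma IsProbDist.posSemidef_sum_smul {ι n : Type*} [Fintype ι] {P : ι → ℝ}
    (hP : IsProbDist P) {E : ι → Matrix n n ℂ} (hE : ∀ i, (E i).PosSemidef) :
    (∑ i, (P i : ℂ) • E i).PosSemidef :=
  Matrix.posSemidef_sum _ fun i _ => (hE i).smul (Complex.zero_le_real.2 (hP.1 i))

section Spectral

variable {𝕜 n : Type*} [RCLike 𝕜] [Fintype n] [DecidableEq n]

lemma Matrix.trace_star_mul_mul_unitary (U : unitary (Matrix n n 𝕜)) (A : Matrix n n 𝕜) :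
    (star (U : Matrix n n 𝕜) * A * U).trace = A.trace := by
  rw [Matrix.trace_mul_cycle, Unitary.mul_star_self_of_mem U.2, one_mul]

lemma Matrix.IsHermitian.eigenvalues_eq_diag_conj {A : Matrix n n 𝕜} (hA : A.IsHermitian)
    (i : n) : (hA.eigenvalues i : 𝕜) =
      ((hA.eigenvectorUnitary : Matrix n n 𝕜)ᴴ * A * hA.eigenvectorUnitary) i i := by
  have hdiag := hA.conjStarAlgAut_star_eigenvectorUnitary
  rw [Unitary.conjStarAlgAut_star_apply, Matrix.star_eq_conjTranspose] at hdiag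
  simp [hdiag]

lemma Matrix.IsHermitian.trace_cfc {A : Matrix n n 𝕜} (hA : A.IsHermitian) (f : ℝ → ℝ) :
    (cfc f A).trace = ∑ i, (f (hA.eigenvalues i) : 𝕜) := by
  rw [hA.cfc_eq, Matrix.IsHermitian.cfc, Unitary.conjStarAlgAut_apply, Matrix.trace_mul_cycle,
    Unitary.coe_star_mul_self, one_mul, Matrix.trace_diagonal]
  rfl

lemma Matrix.IsHermitian.norm_frobeniusVec_sq {A : Matrix n n 𝕜} (hA : A.IsHermitian) :
    ‖A.frobeniusVec‖ ^ 2 = ∑ i, hA.eigenvalues i ^ 2 := by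
  rw [Matrix.norm_frobeniusVec_sq, hA.eq, ← sq, ← cfc_pow_id (R := ℝ) A 2 hA.isSelfAdjoint,
    hA.trace_cfc, map_sum]
  simp

open scoped MatrixOrder in
lemma Matrix.IsHermitian.eigenvalues_le {A : Matrix n n 𝕜} (hA : A.IsHermitian) {r : ℝ}
    (h : ((r : 𝕜) • 1 - A).PosSemidef) (i : n) : hA.eigenvalues i ≤ r := by
  have hle : A ≤ algebraMap ℝ (Matrix n n 𝕜) r := by
    rwa [Matrix.le_iff, Algebra.algebraMap_eq_smul_one, RCLike.real_smul_eq_coe_smul (K := 𝕜)]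
  exact (le_algebraMap_iff_spectrum_le hA.isSelfAdjoint).1 hle _
    (hA.eigenvalues_mem_spectrum_real i)

lemma Matrix.PosSemidef.norm_frobeniusVec_sq_le {A : Matrix n n 𝕜} (hA : A.PosSemidef) {r : ℝ}
    (hr : ((r : 𝕜) • 1 - A).PosSemidef) : ‖A.frobeniusVec‖ ^ 2 ≤ r * RCLike.re A.trace := by
  rw [hA.1.norm_frobeniusVec_sq, hA.1.trace_eq_sum_eigenvalues, map_sum, Finset.mul_sum]
  refine Finset.sum_le_sum fun i _ => ?_
  rw [RCLike.ofReal_re, sq]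
  exact mul_le_mul_of_nonneg_right (hA.1.eigenvalues_le hr i) (hA.eigenvalues_nonneg i)

end Spectral

section TraceNorm

variable {n : Type*} [Fintype n] [DecidableEq n]

open scoped MatrixOrder in
lemma Matrix.PosSemidef.sqrt_eq_cfcSqrt {A : Matrix n n ℂ} (hA : A.PosSemidef) :
    hA.sqrt = CFC.sqrt A := by
  rw [CFC.sqrt_eq_cfc, cfc_nnreal_eq_real _ A, hA.1.cfc_eq]
  simp only [Matrix.IsHermitian.cfc, Matrix.PosSemidef.sqrt, Unitary.conjStarAlgAut_apply]
  congr 3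
  funext i
  simp [Real.coe_sqrt, Real.coe_toNNReal', max_eq_left (hA.eigenvalues_nonneg i)]

open scoped MatrixOrder in
lemma traceNorm_eq_re_trace_abs (A : Matrix n n ℂ) : traceNorm A = (CFC.abs A).trace.re := by
  rw [traceNorm, Matrix.PosSemidef.sqrt_eq_cfcSqrt]
  rfl

open scoped MatrixOrder in
lemma Matrix.IsHermitian.traceNorm_eq_sum_abs_eigenvalues {A : Matrix n n ℂ}
    (hA : A.IsHermitian) : traceNorm A = ∑ i, |hA.eigenvalues i| := by
  rw [traceNorm_eq_re_trace_abs, CFC.abs_eq_cfc_norm A hA.isSelfAdjoint, hA.trace_cfc,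
    Complex.re_sum]
  simp

lemma Matrix.IsHermitian.traceNorm_sq_le {A : Matrix n n ℂ} (hA : A.IsHermitian) :
    traceNorm A ^ 2 ≤ Fintype.card n * ‖A.frobeniusVec‖ ^ 2 := by
  rw [hA.traceNorm_eq_sum_abs_eigenvalues, hA.norm_frobeniusVec_sq]
  simpa only [sq_abs, Finset.card_univ] using sq_sum_le_card_mul_sum_sq (s := Finset.univ)
    (f := fun i => |hA.eigenvalues i|)

lemma traceNorm_sub_le {A B : Matrix n n ℂ} (hA : A.PosSemidef) (hB : B.PosSemidef) :
    traceNorm (A - B) ≤ A.trace.re + B.trace.re := by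
  -- In the eigenbasis of `A - B`, each eigenvalue is the difference of two nonnegative diagonal
  -- entries, those of the conjugates of `A` and `B`, whose sums are `Tr A` and `Tr B`.
  have hX : (A - B).IsHermitian := hA.1.sub hB.1
  set U := hX.eigenvectorUnitary
  rw [hX.traceNorm_eq_sum_abs_eigenvalues, ← Matrix.trace_star_mul_mul_unitary U A,
    ← Matrix.trace_star_mul_mul_unitary U B, Matrix.star_eq_conjTranspose, Matrix.trace,
    Matrix.trace, Complex.re_sum, Complex.re_sum, ← Finset.sum_add_distrib]
  refine Finset.sum_le_sum fun i _ => ?_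
  have hA' := Complex.nonneg_iff.1
    ((hA.conjTranspose_mul_mul_same (U : Matrix n n ℂ)).diag_nonneg (i := i))
  have hB' := Complex.nonneg_iff.1
    ((hB.conjTranspose_mul_mul_same (U : Matrix n n ℂ)).diag_nonneg (i := i))
  have hi := congrArg Complex.re (hX.eigenvalues_eq_diag_conj i)
  rw [Matrix.mul_sub, Matrix.sub_mul, Matrix.sub_apply, Complex.sub_re] at hi
  simp only [Complex.coe_algebraMap, Complex.ofReal_re] at hi
  simp only [Matrix.diag_apply]
  rw [abs_le]
  constructor <;> linarith [hA'.1, hB'.1]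

variable {ι : Type*} [Fintype ι] {P : ι → ℝ} {E : ι → Matrix n n ℂ} {q : ℝ}

lemma IsProbDist.traceNorm_sum_smul_sub_le (hP : IsProbDist P) (hE : ∀ i, (E i).PosSemidef)
    (htr : ∀ i, (E i).trace.re = q) (j : ι) :
    traceNorm (∑ i, (P i : ℂ) • E i - E j) ≤ 2 * q := by
  have hρtr : (∑ i, (P i : ℂ) • E i).trace.re = q := by
    rw [Matrix.trace_sum, Complex.re_sum]
    simp only [Matrix.trace_smul, smul_eq_mul, Complex.re_ofReal_mul, htr]
    rw [← Finset.sum_mul, hP.2, one_mul]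
  have := traceNorm_sub_le (hP.posSemidef_sum_smul hE) (hE j)
  rw [hρtr, htr j] at this
  linarith

theorem IsProbDist.exists_traceNorm_sub_average_sq_le (hP : IsProbDist P)
    (hE : ∀ i, (E i).PosSemidef) {η : ℝ} (hη : ∀ i, ((η : ℂ) • 1 - E i).PosSemidef)
    (htr : ∀ i, (E i).trace.re = q) {L : ℕ} (hL : 0 < L) :
    ∃ sel : Fin L → ι, traceNorm (∑ i, (P i : ℂ) • E i - (L : ℂ)⁻¹ • ∑ k, E (sel k)) ^ 2 ≤
      Fintype.card n * (η * q / L) := by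
  obtain ⟨sel, hsel⟩ := hP.exists_norm_sub_average_sq_le (𝕜 := ℂ) (fun i => (E i).frobeniusVec)
    (fun i => by simpa only [RCLike.re_to_complex, htr i] using
      (hE i).norm_frobeniusVec_sq_le (hη i)) hL
  refine ⟨sel, ?_⟩
  have hsel_psd : ((L : ℂ)⁻¹ • ∑ k, E (sel k)).PosSemidef :=
    (Matrix.posSemidef_sum _ fun k _ => hE (sel k)).smul (by positivity)
  calc _ ≤ _ := ((hP.posSemidef_sum_smul hE).1.sub hsel_psd.1).traceNorm_sq_le
    _ ≤ _ := by
      gcongr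
      refine le_of_eq_of_le ?_ hsel
      simp only [map_sub, map_sum, map_smul]
      rfl

end TraceNorm

lemma exists_pos_nat_between {x : ℝ} (hx : 0 ≤ x) : ∃ L : ℕ, 0 < L ∧ x ≤ L ∧ (L : ℝ) ≤ 1 + x :=
  ⟨⌊x⌋₊ + 1, Nat.succ_pos _, by exact_mod_cast (Nat.lt_floor_add_one x).le, by
    push_cast; linarith [Nat.floor_le hx]⟩

lemma one_le_two_mul_log_two_mul_logb {d : ℕ} (hd : 0 < d) :
    1 ≤ 2 * Real.log 2 * Real.logb 2 (2 * d) := by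
  have h2d : (2 : ℝ) ≤ 2 * d := by
    have : (1 : ℝ) ≤ d := by exact_mod_cast hd
    linarith
  rw [Real.logb, mul_assoc, mul_div_cancel₀ _ (Real.log_pos one_lt_two).ne']
  linarith [Real.log_le_log two_pos h2d, Real.log_two_gt_d9]

theorem stmt9_general {d : ℕ} (hd : 0 < d) {ι : Type*} [Fintype ι]
    (Ed : ι → Matrix (Fin d) (Fin d) ℂ) (η q : ℝ) (hq : q ≤ 1)
    (hE : ∀ i, (Ed i).PosSemidef ∧ (1 - Ed i).PosSemidef ∧ ((η:ℂ) • 1 - Ed i).PosSemidef)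
    (htr : ∀ i, (Ed i).trace = (q : ℂ))
    (P : ι → ℝ) (hP : IsProbDist P)
    (ρ : Matrix (Fin d) (Fin d) ℂ) (hρ : ρ = ∑ i, (P i : ℂ) • Ed i)
    (ε τ : ℝ) (hε : 0 < ε) (hτ : 0 < τ) :
    ∃ (L : ℕ) (sel : Fin L → ι), 0 < L ∧
      (L:ℝ) ≤ 1 + η * d * (2 * Real.log 2 * Real.logb 2 (2 * d)) / (ε^2 * τ) ∧
      traceNorm (ρ - (L:ℂ)⁻¹ • ∑ i, Ed (sel i)) ≤ (ε + τ) + Real.sqrt (8 * (ε + τ)) := by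
  obtain ⟨i₀⟩ := hP.nonempty
  have htr_re : ∀ i, (Ed i).trace.re = q := fun i => by rw [htr i, Complex.ofReal_re]
  have hη : 0 ≤ η := ((hE i₀).1.eigenvalues_nonneg ⟨0, hd⟩).trans
    ((hE i₀).1.1.eigenvalues_le (hE i₀).2.2 _)
  have hηd : 0 ≤ η * d := mul_nonneg hη d.cast_nonneg
  have hK := one_le_two_mul_log_two_mul_logb hd
  set K := 2 * Real.log 2 * Real.logb 2 (2 * d)
  subst hρ
  by_cases hsmall : ε + τ < 1 / 2
  · obtain ⟨L, hL, hxL, hLx⟩ := exists_pos_nat_between (x := η * d / (8 * (ε + τ))) (by positivity)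
    obtain ⟨sel, hsel⟩ := hP.exists_traceNorm_sub_average_sq_le (fun i => (hE i).1)
      (fun i => (hE i).2.2) htr_re hL
    refine ⟨L, sel, hL, hLx.trans ?_, le_add_of_nonneg_of_le (by positivity)
      ((le_abs_self _).trans (Real.abs_le_sqrt (hsel.trans ?_)))⟩
    · rw [add_le_add_iff_left, div_le_div_iff₀ (by positivity) (by positivity)]
      nlinarith [mul_le_mul_of_nonneg_left (by nlinarith : ε ^ 2 * τ ≤ 8 * (ε + τ) * K) hηd]
    · rw [div_le_iff₀' (by positivity)] at hxL
      rw [Fintype.card_fin, mul_div_assoc', div_le_iff₀ (by positivity)]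
      nlinarith [mul_le_mul_of_nonneg_left hq hηd]
  · refine ⟨1, fun _ => i₀, one_pos, ?_, ?_⟩
    · have : 0 ≤ η * d * K / (ε ^ 2 * τ) :=
        div_nonneg (mul_nonneg hηd (by linarith)) (by positivity)
      push_cast
      linarith
    · have h2 : 2 ≤ Real.sqrt (8 * (ε + τ)) := (Real.le_sqrt' two_pos).2 (by linarith)
      calc _ = traceNorm (∑ i, (P i : ℂ) • Ed i - Ed i₀) := by simp
        _ ≤ 2 * q := hP.traceNorm_sum_smul_sub_le (fun i => (hE i).1) htr_re i₀
        _ ≤ _ := by linarith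

theorem stmt9 {d : ℕ} (hd : 0 < d) {ι : Type*} [Fintype ι] [Nonempty ι]
    (Ed : ι → Matrix (Fin d) (Fin d) ℂ) (η q : ℝ) (hq : q ≤ 1)
    (hE : ∀ i, (Ed i).PosSemidef ∧ (1 - Ed i).PosSemidef ∧ ((η:ℂ) • 1 - Ed i).PosSemidef)
    (htr : ∀ i, (Ed i).trace = (q : ℂ))
    (P : ι → ℝ) (hP : IsProbDist P)
    (ρ : Matrix (Fin d) (Fin d) ℂ) (hρ : ρ = ∑ i, (P i : ℂ) • Ed i)
    (ε τ : ℝ) (hε : 0 < ε) (hτ : 0 < τ) :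
    ∃ (L : ℕ) (sel : Fin L → ι), 0 < L ∧
      (L:ℝ) ≤ 1 + η * d * (2 * Real.log 2 * Real.logb 2 (2 * d)) / (ε^2 * τ) ∧
      traceNorm (ρ - (L:ℂ)⁻¹ • ∑ i, Ed (sel i)) ≤ (ε + τ) + Real.sqrt (8 * (ε + τ)) :=
  stmt9_general hd Ed η q hq hE htr P hP ρ hρ ε τ hε hτ
end

section
/- (Operator Markov inequality.) Let X be a discrete random variable with values in the positive semidefinite operators on a d-dimensional complex Hilbert space, with expectation M = 𝔼X, and let A be a positive definite operator. Then Pr{ X ≰ A } ≤ Tr(M·A⁻¹). -/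
open scoped BigOperators
open ComplexOrder
open scoped Matrix

/-- Probability of an event under a finitely supported distribution. -/
noncomputable def prOf {α : Type*} [Fintype α] (p : α → ℝ) (s : Set α) : ℝ :=
  ∑ a, s.indicator p a

lemma trace_eq_sum_eig {n : Type*} [Fintype n] [DecidableEq n] {Y : Matrix n n ℂ}
    (hY : Y.IsHermitian) : Y.trace = ∑ i, (hY.eigenvalues i : ℂ) := by
  conv_lhs => rw [hY.spectral_theorem]
  rw [Unitary.conjStarAlgAut_apply, Matrix.trace_mul_cycle, Unitary.coe_star_mul_self, one_mul,
    Matrix.trace_diagonal]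
  rfl

lemma key_lemma {d : ℕ} {X A : Matrix (Fin d) (Fin d) ℂ}
    (hX : X.PosSemidef) (hA : A.PosDef) :
    0 ≤ (X * A⁻¹).trace.re ∧ (¬ (A - X).PosSemidef → 1 ≤ (X * A⁻¹).trace.re) := by
  obtain ⟨B, hBpsd, hBB⟩ : ∃ B : Matrix (Fin d) (Fin d) ℂ, B.PosSemidef ∧ B * B = A⁻¹ :=
    open scoped MatrixOrder in
    ⟨CFC.sqrt A⁻¹, Matrix.nonneg_iff_posSemidef.mp (CFC.sqrt_nonneg _),
      CFC.sqrt_mul_sqrt_self _ (Matrix.nonneg_iff_posSemidef.mpr hA.inv.posSemidef)⟩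
  have hBH : Bᴴ = B := hBpsd.1
  have hAH : Aᴴ = A := hA.1
  have hAAinv : A * A⁻¹ = 1 :=
    Matrix.mul_nonsing_inv A ((Matrix.isUnit_iff_isUnit_det A).1 hA.isUnit)
  have hAinvA : A⁻¹ * A = 1 :=
    Matrix.nonsing_inv_mul A ((Matrix.isUnit_iff_isUnit_det A).1 hA.isUnit)
  have hY : (B * X * B).PosSemidef := by
    have := hX.mul_mul_conjTranspose_same B
    rwa [hBH] at this
  have htr : (X * A⁻¹).trace = (B * X * B).trace := by
    rw [Matrix.trace_mul_cycle B X B, hBB, Matrix.trace_mul_comm]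
  have htre : (X * A⁻¹).trace.re = ∑ i, hY.1.eigenvalues i := by
    rw [htr, trace_eq_sum_eig hY.1, Complex.re_sum]
    simp
  constructor
  · rw [htre]
    exact Finset.sum_nonneg fun i _ => hY.eigenvalues_nonneg i
  · intro hnot
    by_contra hlt
    push_neg at hlt
    apply hnot
    have heig : ∀ i, hY.1.eigenvalues i ≤ (X * A⁻¹).trace.re := by
      intro i
      rw [htre]
      exact Finset.single_le_sum (fun j _ => hY.eigenvalues_nonneg j) (Finset.mem_univ i)
    have h1Y : ((1 : Matrix (Fin d) (Fin d) ℂ) - B * X * B).PosSemidef := by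
      have hU : (hY.1.eigenvectorUnitary : Matrix (Fin d) (Fin d) ℂ) *
          (star hY.1.eigenvectorUnitary : Matrix (Fin d) (Fin d) ℂ) = 1 :=
        Unitary.coe_mul_star_self _
      have hdiag : ((1 : Matrix (Fin d) (Fin d) ℂ) - B * X * B) =
          (hY.1.eigenvectorUnitary : Matrix (Fin d) (Fin d) ℂ) *
          Matrix.diagonal (fun i => ((1 - hY.1.eigenvalues i : ℝ) : ℂ)) *
          (star hY.1.eigenvectorUnitary : Matrix (Fin d) (Fin d) ℂ) := by
        conv_lhs => rw [hY.1.spectral_theorem]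
        have hd : Matrix.diagonal (fun i => ((1 - hY.1.eigenvalues i : ℝ) : ℂ)) =
            1 - Matrix.diagonal (RCLike.ofReal ∘ hY.1.eigenvalues) := by
          rw [← Matrix.diagonal_one, Matrix.diagonal_sub]
          funext i
          simp
        rw [Unitary.conjStarAlgAut_apply, hd, Matrix.mul_sub, Matrix.sub_mul, Matrix.mul_one, hU]
      rw [hdiag]
      apply Matrix.PosSemidef.mul_mul_conjTranspose_same
      refine Matrix.posSemidef_diagonal_iff.mpr fun i => ?_
      rw [Complex.zero_le_real]
      have := (heig i).trans_lt hlt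
      linarith
    have hCC : (A * B) * (A * B)ᴴ = A := by
      rw [Matrix.conjTranspose_mul, hBH, hAH, Matrix.mul_assoc A B,
        ← Matrix.mul_assoc B B, hBB, hAinvA, Matrix.mul_one]
    have hCYC : (A * B) * (B * X * B) * (A * B)ᴴ = X := by
      rw [Matrix.conjTranspose_mul, hBH, hAH]
      have e1 : A * B * (B * X * B) * (B * A) = A * (B * B) * (X * ((B * B) * A)) := by
        simp only [Matrix.mul_assoc]
      rw [e1, hBB, hAAinv, hAinvA, one_mul, Matrix.mul_one]
    have := h1Y.mul_mul_conjTranspose_same (A * B)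
    rwa [Matrix.mul_sub, Matrix.mul_one, Matrix.sub_mul, hCC, hCYC] at this

theorem stmt10 {d : ℕ} {Ω : Type*} [Fintype Ω] (p : Ω → ℝ) (hp : IsProbDist p)
    (Xv : Ω → Matrix (Fin d) (Fin d) ℂ) (hX : ∀ ω, (Xv ω).PosSemidef)
    (M : Matrix (Fin d) (Fin d) ℂ) (hM : M = ∑ ω, (p ω : ℂ) • Xv ω)
    (A : Matrix (Fin d) (Fin d) ℂ) (hA : A.PosDef) :
    prOf p {ω | ¬ (A - Xv ω).PosSemidef} ≤ (M * A⁻¹).trace.re := by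
  classical
  have key : ∀ ω, ({ω | ¬ (A - Xv ω).PosSemidef}).indicator p ω ≤
      p ω * (Xv ω * A⁻¹).trace.re := by
    intro ω
    obtain ⟨h0, h1⟩ := key_lemma (hX ω) hA
    by_cases hω : ω ∈ {ω | ¬ (A - Xv ω).PosSemidef}
    · rw [Set.indicator_of_mem hω]
      calc p ω = p ω * 1 := (mul_one _).symm
        _ ≤ p ω * (Xv ω * A⁻¹).trace.re :=
          mul_le_mul_of_nonneg_left (h1 hω) (hp.1 ω)
    · rw [Set.indicator_of_notMem hω]
      exact mul_nonneg (hp.1 ω) h0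
  have hMtr : (M * A⁻¹).trace.re = ∑ ω, p ω * (Xv ω * A⁻¹).trace.re := by
    rw [hM, Finset.sum_mul, Matrix.trace_sum, Complex.re_sum]
    refine Finset.sum_congr rfl fun ω _ => ?_
    rw [Matrix.smul_mul, Matrix.trace_smul, smul_eq_mul, Complex.re_ofReal_mul]
  rw [prOf, hMtr]
  exact Finset.sum_le_sum fun ω _ => key ω
end

section
/- (Operator Chebyshev inequality.) Let X be a discrete random variable with values in the selfadjoint operators on a d-dimensional complex Hilbert space, with expectation M = 𝔼X and variance S² = 𝔼((X − M)²), and let Δ be a positive definite operator. Then Pr{ |X − M| ≰ Δ } ≤ Tr(S²·Δ⁻²), where |Y| = √(Y*Y) denotes the operator absolute value. -/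
/-
If `|Y| ≰ Δ` then `Y² ≰ Δ²`, because the square root is operator monotone. A vector `v` with
`c := v* Δ² v < v* Y² v` then gives `Tr(Y² Δ⁻²) ≥ v* Y² v / c > 1`, since `v v* / c ≤ Δ⁻²`.
Hence the indicator of `|X - M| ≰ Δ` is dominated by `Tr((X - M)² Δ⁻²)`, whose expectation is
`Tr(S² Δ⁻²)`: this is Markov's inequality for the nonnegative variable `Tr((X - M)² Δ⁻²)`.
-/

open scoped BigOperators
open ComplexOrder
open scoped Matrix

/-- Operator absolute value |Y| = √(YᴴY). -/
noncomputable def opAbs {m : Type*} [Fintype m] [DecidableEq m]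
    (A : Matrix m m ℂ) : Matrix m m ℂ :=
  (Matrix.posSemidef_conjTranspose_mul_self A).1.eigenvectorUnitary.1 *
    Matrix.diagonal ((↑) ∘ (√·) ∘ (Matrix.posSemidef_conjTranspose_mul_self A).1.eigenvalues) *
    (star (Matrix.posSemidef_conjTranspose_mul_self A).1.eigenvectorUnitary : Matrix m m ℂ)

open scoped MatrixOrder Matrix.Norms.L2Operator
open Matrix

namespace Matrix

variable {n 𝕜 : Type*} [Fintype n] [RCLike 𝕜]

theorem exists_dotProduct_mulVec_lt_of_not_le {Q R : Matrix n n 𝕜} (hQ : Q.IsHermitian)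
    (hR : R.IsHermitian) (h : ¬ Q ≤ R) :
    ∃ v, star v ⬝ᵥ R *ᵥ v < star v ⬝ᵥ Q *ᵥ v := by
  have hRQ := hR.sub hQ
  obtain ⟨v, hv⟩ : ∃ v, ¬ 0 ≤ star v ⬝ᵥ (R - Q) *ᵥ v := by
    simpa [le_iff, posSemidef_iff_dotProduct_mulVec, hRQ] using h
  have him : RCLike.im (star v ⬝ᵥ R *ᵥ v) = RCLike.im (star v ⬝ᵥ Q *ᵥ v) := by
    simpa [sub_mulVec, dotProduct_sub, sub_eq_zero] using hRQ.im_star_dotProduct_mulVec_self v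
  rw [sub_mulVec, dotProduct_sub, sub_nonneg] at hv
  refine ⟨v, RCLike.lt_iff_re_im.mpr ⟨not_le.mp fun hre => hv ?_, him⟩⟩
  exact RCLike.le_iff_re_im.mpr ⟨hre, him.symm⟩

variable [DecidableEq n]

theorem trace_mul_nonneg {A B : Matrix n n 𝕜} (hA : 0 ≤ A) (hB : 0 ≤ B) :
    0 ≤ (A * B).trace := by
  obtain ⟨C, rfl⟩ := CStarAlgebra.nonneg_iff_eq_star_mul_self.mp hB
  rw [← Matrix.mul_assoc, trace_mul_cycle]
  exact (hA.posSemidef.mul_mul_conjTranspose_same C).trace_nonneg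

theorem trace_mul_le_trace_mul {Q A B : Matrix n n 𝕜} (hQ : 0 ≤ Q) (hAB : A ≤ B) :
    (Q * A).trace ≤ (Q * B).trace := by
  rw [← sub_nonneg, ← trace_sub, ← Matrix.mul_sub]
  exact trace_mul_nonneg hQ (sub_nonneg.mpr hAB)

/-- The block matrix `[[R⁻¹, v], [v*, v* R v]]` is positive semidefinite because its Schur
complement with respect to `R⁻¹` vanishes; its other Schur complement is `R⁻¹ - v v* / (v* R v)`. -/
theorem PosDef.smul_vecMulVec_le_inv {R : Matrix n n 𝕜} (hR : R.PosDef) (v : n → 𝕜) :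
    (star v ⬝ᵥ R *ᵥ v)⁻¹ • vecMulVec v (star v) ≤ R⁻¹ := by
  rcases eq_or_ne v 0 with rfl | hv
  · simpa using hR.inv.posSemidef.nonneg
  set c := star v ⬝ᵥ R *ᵥ v
  have hc : (c • 1 : Matrix Unit Unit 𝕜).PosDef := PosDef.one.smul (hR.dotProduct_mulVec_pos hv)
  have : Invertible (c • 1 : Matrix Unit Unit 𝕜) := hc.isUnit.invertible
  have : Invertible R := hR.isUnit.invertible
  have hschur := (PosDef.fromBlocks₁₁ (replicateCol Unit v) (c • 1) hR.inv).mpr ?_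
  · rw [PosDef.fromBlocks₂₂ _ _ hc] at hschur
    have hc0 : c ≠ 0 := (hR.dotProduct_mulVec_pos hv).ne'
    have hrank_one : replicateCol Unit v * (c • 1 : Matrix Unit Unit 𝕜)⁻¹ *
        (replicateCol Unit v)ᴴ = c⁻¹ • vecMulVec v (star v) := by
      rw [inv_eq_left_inv (B := c⁻¹ • 1) (by simp [smul_smul, hc0]), Matrix.mul_smul,
        Matrix.mul_one, conjTranspose_replicateCol, smul_mul, ← vecMulVec_eq]
    rwa [hrank_one] at hschur
  · rw [inv_inv_of_invertible]
    convert PosSemidef.zero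
    ext
    simp [c, dotProduct_mulVec, vecMul, dotProduct, mul_apply]

theorem one_le_trace_mul_inv_of_not_le {Q R : Matrix n n 𝕜} (hQ : 0 ≤ Q) (hR : R.PosDef)
    (h : ¬ Q ≤ R) : 1 ≤ (Q * R⁻¹).trace := by
  obtain ⟨v, hv⟩ :=
    exists_dotProduct_mulVec_lt_of_not_le hQ.posSemidef.isHermitian hR.isHermitian h
  have hc : 0 < star v ⬝ᵥ R *ᵥ v := hR.dotProduct_mulVec_pos (by rintro rfl; simp at hv)
  calc 1 = (star v ⬝ᵥ R *ᵥ v)⁻¹ * (star v ⬝ᵥ R *ᵥ v) := (inv_mul_cancel₀ hc.ne').symm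
    _ ≤ (star v ⬝ᵥ R *ᵥ v)⁻¹ * (star v ⬝ᵥ Q *ᵥ v) := by gcongr
    _ = (Q * ((star v ⬝ᵥ R *ᵥ v)⁻¹ • vecMulVec v (star v))).trace := by
      rw [Matrix.mul_smul, trace_smul, mul_vecMulVec, trace_vecMulVec, dotProduct_comm (Q *ᵥ v),
        smul_eq_mul]
    _ ≤ (Q * R⁻¹).trace := trace_mul_le_trace_mul hQ (hR.smul_vecMulVec_le_inv v)

end Matrix

section opAbs

variable {n : Type*} [Fintype n] [DecidableEq n]

theorem opAbs_eq_sqrt (A : Matrix n n ℂ) : opAbs A = CFC.sqrt (Aᴴ * A) := by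
  rw [CFC.sqrt_eq_real_sqrt _ (posSemidef_conjTranspose_mul_self A).nonneg, cfcₙ_eq_cfc,
    (posSemidef_conjTranspose_mul_self A).1.cfc_eq]
  rfl

theorem opAbs_le_of_conjTranspose_mul_self_le {A D : Matrix n n ℂ} (hD : 0 ≤ D)
    (h : Aᴴ * A ≤ D ^ 2) : opAbs A ≤ D := by
  rw [opAbs_eq_sqrt, ← CFC.sqrt_sq D]
  exact CFC.sqrt_le_sqrt _ _ h

end opAbs

theorem prOf_le_sum_mul_of_one_le {α : Type*} [Fintype α] {p : α → ℝ} (hp : ∀ a, 0 ≤ p a)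
    {s : Set α} {f : α → ℝ} (hf : ∀ a, 0 ≤ f a) (hfs : ∀ a ∈ s, 1 ≤ f a) :
    prOf p s ≤ ∑ a, p a * f a := by
  refine Finset.sum_le_sum fun a _ => ?_
  by_cases ha : a ∈ s
  · simpa [ha] using mul_le_mul_of_nonneg_left (hfs a ha) (hp a)
  · simpa [ha] using mul_nonneg (hp a) (hf a)

theorem stmt11 {d : ℕ} {Ω : Type*} [Fintype Ω] (p : Ω → ℝ) (hp : IsProbDist p)
    (Xv : Ω → Matrix (Fin d) (Fin d) ℂ) (hX : ∀ ω, (Xv ω).IsHermitian)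
    (M : Matrix (Fin d) (Fin d) ℂ) (hM : M = ∑ ω, (p ω : ℂ) • Xv ω)
    (S2 : Matrix (Fin d) (Fin d) ℂ)
    (hS2 : S2 = ∑ ω, (p ω : ℂ) • ((Xv ω - M) * (Xv ω - M)))
    (Δ : Matrix (Fin d) (Fin d) ℂ) (hΔ : Δ.PosDef) :
    prOf p {ω | ¬ (Δ - opAbs (Xv ω - M)).PosSemidef} ≤ (S2 * (Δ^2)⁻¹).trace.re := by
  have hMH : M.IsHermitian :=
    hM ▸ isSelfAdjoint_sum _ fun ω _ => IsSelfAdjoint.smul (Complex.conj_ofReal (p ω)) (hX ω)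
  have hY : ∀ ω, (Xv ω - M)ᴴ = Xv ω - M := fun ω => ((hX ω).sub hMH).eq
  have hQ : ∀ ω, 0 ≤ (Xv ω - M) * (Xv ω - M) := fun ω => by
    simpa [hY ω] using (posSemidef_conjTranspose_mul_self (Xv ω - M)).nonneg
  have hR : (Δ ^ 2).PosDef := (hΔ.posSemidef.pow 2).posDef_iff_isUnit.mpr (hΔ.isUnit.pow 2)
  have htail : ∀ ω ∈ {ω | ¬ (Δ - opAbs (Xv ω - M)).PosSemidef},
      1 ≤ ((Xv ω - M) * (Xv ω - M) * (Δ ^ 2)⁻¹).trace.re := fun ω hω =>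
    (Complex.le_def.mp <| one_le_trace_mul_inv_of_not_le (hQ ω) hR fun h =>
      hω <| opAbs_le_of_conjTranspose_mul_self_le hΔ.posSemidef.nonneg (by rwa [hY ω])).1
  calc prOf p {ω | ¬ (Δ - opAbs (Xv ω - M)).PosSemidef}
      ≤ ∑ ω, p ω * ((Xv ω - M) * (Xv ω - M) * (Δ ^ 2)⁻¹).trace.re :=
        prOf_le_sum_mul_of_one_le hp.1
          (fun ω => (Complex.le_def.mp (trace_mul_nonneg (hQ ω) hR.inv.posSemidef.nonneg)).1)
          htail
    _ = (S2 * (Δ^2)⁻¹).trace.re := by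
        simp [hS2, Finset.sum_mul, trace_sum, trace_smul]
end

section
/- (Operator weak law of large numbers.) Let X, X₁, …, Xₙ be i.i.d. discrete random variables with values in the selfadjoint operators on a d-dimensional complex Hilbert space, with M = 𝔼X and S² = 𝔼((X − M)²), and let Δ be a positive definite operator. Then Pr{ (1/n)∑_{i=1}^{n} Xᵢ ∉ [M − Δ, M + Δ] } ≤ (1/n)·Tr(S²·Δ⁻²), and Pr{ ∑_{i=1}^{n} Xᵢ ∉ [nM − Δ√n, nM + Δ√n] } ≤ Tr(S²·Δ⁻²). -/
open scoped BigOperators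
open ComplexOrder
open scoped Matrix

/-- i.i.d. product distribution. -/
def prodP {Ω : Type*} [Fintype Ω] (p : Ω → ℝ) (n : ℕ) : (Fin n → Ω) → ℝ :=
  fun ω => ∏ i, p (ω i)


variable {d : ℕ}

lemma trace_mul_conjTranspose_re_nonneg (C : Matrix (Fin d) (Fin d) ℂ) :
    0 ≤ ((C * Cᴴ).trace).re := by
  have h : ((C * Cᴴ).trace) = ∑ i, ∑ j, C i j * (starRingEnd ℂ) (C i j) := by
    simp [Matrix.trace, Matrix.diag, Matrix.mul_apply, Matrix.conjTranspose_apply]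
  rw [h]
  simp only [Complex.mul_conj, Complex.re_sum, Complex.ofReal_re]
  exact Finset.sum_nonneg fun i _ => Finset.sum_nonneg fun j _ => Complex.normSq_nonneg _

lemma trace_ABAB_le (A B : Matrix (Fin d) (Fin d) ℂ) (hA : A.IsHermitian) (hB : B.IsHermitian) :
    ((A * B * A * B).trace).re ≤ ((A * A * (B * B)).trace).re := by
  have hC : (A * B - B * A)ᴴ = B * A - A * B := by
    simp [Matrix.conjTranspose_sub, Matrix.conjTranspose_mul, hA.eq, hB.eq]
  have h0 := trace_mul_conjTranspose_re_nonneg (C := A * B - B * A)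
  rw [hC] at h0
  have hexp : (A * B - B * A) * (B * A - A * B)
      = A * B * B * A - A * B * A * B - B * A * B * A + B * A * A * B := by
    noncomm_ring
  rw [hexp] at h0
  have c1 : (A * B * B * A).trace = (A * A * (B * B)).trace := by
    rw [Matrix.trace_mul_comm (A * B * B) A]; congr 1; noncomm_ring
  have c2 : (B * A * A * B).trace = (A * A * (B * B)).trace := by
    rw [Matrix.trace_mul_comm (B * A * A) B,
      show B * (B * A * A) = (B * B) * (A * A) by noncomm_ring, Matrix.trace_mul_comm]
  have c3 : (B * A * B * A).trace = (A * B * A * B).trace := by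
    rw [Matrix.trace_mul_comm (B * A * B) A]; congr 1; noncomm_ring
  rw [Matrix.trace_add, Matrix.trace_sub, Matrix.trace_sub, c1, c2, c3] at h0
  simp only [Complex.add_re, Complex.sub_re] at h0
  linarith

lemma conj_diag_psd (U : Matrix (Fin d) (Fin d) ℂ) (f : Fin d → ℝ) (hf : ∀ i, 0 ≤ f i) :
    (U * Matrix.diagonal (fun i => (f i : ℂ)) * star U).PosSemidef := by
  rw [Matrix.star_eq_conjTranspose U]
  exact Matrix.PosSemidef.mul_mul_conjTranspose_same
    (Matrix.posSemidef_diagonal_iff.mpr fun i => Complex.zero_le_real.mpr (hf i)) U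

lemma trace_sq_eigen {Z : Matrix (Fin d) (Fin d) ℂ} (hZ : Z.IsHermitian) :
    ((Z * Z).trace).re = ∑ i, (hZ.eigenvalues i)^2 := by
  set U : Matrix (Fin d) (Fin d) ℂ := (Matrix.IsHermitian.eigenvectorUnitary hZ : Matrix (Fin d) (Fin d) ℂ) with hU
  have hUU' : star U * U = 1 := Matrix.mem_unitaryGroup_iff'.mp hZ.eigenvectorUnitary.2
  set D : Matrix (Fin d) (Fin d) ℂ :=
    Matrix.diagonal (RCLike.ofReal ∘ hZ.eigenvalues) with hD
  have hspec : Z = U * D * star U := Matrix.IsHermitian.spectral_theorem hZ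
  have h1 : Z * Z = U * (D * D) * star U := by
    rw [hspec]
    calc U * D * star U * (U * D * star U) = U * (D * (star U * U) * D) * star U := by
          noncomm_ring
    _ = U * (D * D) * star U := by rw [hUU']; noncomm_ring
  rw [h1, Matrix.trace_mul_cycle, ← Matrix.mul_assoc, hUU', Matrix.one_mul]
  rw [hD, Matrix.diagonal_mul_diagonal, Matrix.trace_diagonal]
  simp [← Complex.ofReal_pow, ← pow_two, Complex.re_sum]

lemma psd_smul_one_pm {Z : Matrix (Fin d) (Fin d) ℂ} (hZ : Z.IsHermitian) {c : ℝ}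
    (h : ∀ i, |hZ.eigenvalues i| ≤ c) :
    ((c : ℂ) • 1 - Z).PosSemidef ∧ ((c : ℂ) • 1 + Z).PosSemidef := by
  set U : Matrix (Fin d) (Fin d) ℂ := (Matrix.IsHermitian.eigenvectorUnitary hZ : Matrix (Fin d) (Fin d) ℂ) with hU
  have hUU : U * star U = 1 := Matrix.mem_unitaryGroup_iff.mp hZ.eigenvectorUnitary.2
  set ev := hZ.eigenvalues with hev
  have hspec : Z = U * Matrix.diagonal (fun i => (ev i : ℂ)) * star U := by
    have := Matrix.IsHermitian.spectral_theorem hZ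
    exact this
  clear_value ev
  have hone : (c : ℂ) • (1 : Matrix (Fin d) (Fin d) ℂ)
      = U * Matrix.diagonal (fun _ => (c : ℂ)) * star U := by
    have h1 : Matrix.diagonal (fun _ : Fin d => (c : ℂ)) = (c : ℂ) • 1 := by
      simp [Matrix.smul_one_eq_diagonal]
    rw [h1, Matrix.mul_smul, Matrix.smul_mul, Matrix.mul_one, hUU]
  constructor
  · have heq : (c : ℂ) • 1 - Z
        = U * Matrix.diagonal (fun i => ((c - ev i : ℝ) : ℂ)) * star U := by
      rw [hone, hspec, ← Matrix.sub_mul, ← Matrix.mul_sub]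
      congr 2
      ext i j
      by_cases hij : i = j <;> simp [Matrix.diagonal, hij]
    rw [heq]
    exact conj_diag_psd U _ fun i => by have := abs_le.mp (h i); linarith [this.2]
  · have heq : (c : ℂ) • 1 + Z
        = U * Matrix.diagonal (fun i => ((c + ev i : ℝ) : ℂ)) * star U := by
      rw [hone, hspec, ← Matrix.add_mul, ← Matrix.mul_add]
      congr 2
      ext i j
      by_cases hij : i = j <;> simp [Matrix.diagonal, hij]
    rw [heq]
    exact conj_diag_psd U _ fun i => by have := abs_le.mp (h i); linarith [this.1]

section
variable (W Δ : Matrix (Fin d) (Fin d) ℂ)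

open scoped MatrixOrder in
lemma pointwise_bounds (hW : W.IsHermitian) (hΔ : Δ.PosDef) :
    0 ≤ ((W * W * (Δ⁻¹ * Δ⁻¹)).trace).re ∧
    ∀ c : ℝ, 0 < c → ((W * W * (Δ⁻¹ * Δ⁻¹)).trace).re < c^2 →
      (W + (c : ℂ) • Δ).PosSemidef ∧ ((c : ℂ) • Δ - W).PosSemidef := by
  set R := CFC.sqrt Δ with hRdef
  have hRps : R.PosSemidef := Matrix.nonneg_iff_posSemidef.mp (CFC.sqrt_nonneg Δ)
  have hRH : R.IsHermitian := hRps.1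
  have hRR : R * R = Δ := CFC.sqrt_mul_sqrt_self Δ hΔ.posSemidef.nonneg
  have hdet : IsUnit R.det := by
    have h1 : R.det * R.det = Δ.det := by rw [← Matrix.det_mul, hRR]
    have h2 : Δ.det ≠ 0 := hΔ.det_pos.ne'
    exact isUnit_iff_ne_zero.mpr (by intro h; rw [h] at h1; simp at h1; exact h2 h1.symm)
  have hRi : R * R⁻¹ = 1 := Matrix.mul_nonsing_inv R hdet
  have hRi' : R⁻¹ * R = 1 := Matrix.nonsing_inv_mul R hdet
  have hRiH : (R⁻¹).IsHermitian := by
    unfold Matrix.IsHermitian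
    rw [Matrix.conjTranspose_nonsing_inv, hRH.eq]
  have hΔi : Δ⁻¹ = R⁻¹ * R⁻¹ := by rw [← hRR, Matrix.mul_inv_rev]
  set Z := R⁻¹ * W * R⁻¹ with hZdef
  have hZH : Z.IsHermitian := by
    unfold Matrix.IsHermitian
    rw [hZdef, Matrix.conjTranspose_mul, Matrix.conjTranspose_mul, hRiH.eq, hW.eq]
    noncomm_ring
  have htr : (Z * Z).trace = (W * Δ⁻¹ * W * Δ⁻¹).trace := by
    have h1 : Z * Z = R⁻¹ * (W * Δ⁻¹ * W) * R⁻¹ := by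
      rw [hZdef, hΔi]; noncomm_ring
    rw [h1, Matrix.trace_mul_cycle, ← Matrix.mul_assoc, ← hΔi,
      Matrix.trace_mul_comm]
    congr 1
    noncomm_ring
  have hDinvH : (Δ⁻¹).IsHermitian := hΔ.inv.isHermitian
  have hle : ((Z * Z).trace).re ≤ ((W * W * (Δ⁻¹ * Δ⁻¹)).trace).re := by
    rw [htr]
    exact trace_ABAB_le W Δ⁻¹ hW hDinvH
  have heig := trace_sq_eigen hZH
  have h0 : 0 ≤ ((Z * Z).trace).re := by
    rw [heig]; positivity
  refine ⟨le_trans h0 hle, fun c hc0 hc => ?_⟩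
  have hzc : ((Z * Z).trace).re < c ^ 2 := lt_of_le_of_lt hle hc
  rw [heig] at hzc
  have habs : ∀ i, |hZH.eigenvalues i| ≤ c := by
    intro i
    have hi : (hZH.eigenvalues i)^2 ≤ ∑ j, (hZH.eigenvalues j)^2 :=
      Finset.single_le_sum (f := fun j => (hZH.eigenvalues j)^2) (fun j _ => sq_nonneg _) (Finset.mem_univ i)
    nlinarith [abs_nonneg (hZH.eigenvalues i), sq_abs (hZH.eigenvalues i), hc0]
  obtain ⟨hpsd1, hpsd2⟩ := psd_smul_one_pm hZH habs
  have hconj : ∀ (A : Matrix (Fin d) (Fin d) ℂ), A.PosSemidef → (R * A * R).PosSemidef := by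
    intro A hA
    have := hA.mul_mul_conjTranspose_same R
    rwa [hRH.eq] at this
  have eZ : R * Z * R = W := by
    have : R * Z * R = (R * R⁻¹) * W * (R⁻¹ * R) := by rw [hZdef]; noncomm_ring
    rw [this, hRi, hRi', Matrix.one_mul, Matrix.mul_one]
  constructor
  · have e1 : R * ((c : ℂ) • 1 + Z) * R = W + (c : ℂ) • Δ := by
      rw [Matrix.mul_add, Matrix.add_mul, Matrix.mul_smul, Matrix.mul_one, Matrix.smul_mul,
        hRR, eZ, add_comm]
    have := hconj _ hpsd2
    rwa [e1] at this
  · have e1 : R * ((c : ℂ) • 1 - Z) * R = (c : ℂ) • Δ - W := by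
      rw [Matrix.mul_sub, Matrix.sub_mul, Matrix.mul_smul, Matrix.mul_one, Matrix.smul_mul,
        hRR, eZ]
    have := hconj _ hpsd1
    rwa [e1] at this
end

lemma sum_pi_prod {ι Ω : Type*} [Fintype ι] [Fintype Ω] [DecidableEq ι] (p : Ω → ℝ)
    (h1 : ∑ a, p a = 1) : ∑ f : ι → Ω, ∏ k, p (f k) = 1 := by
  rw [← Fintype.prod_sum (fun (_ : ι) (a : Ω) => p a)]
  simp [h1]

lemma marg1 {ι Ω : Type*} [Fintype ι] [Fintype Ω] [DecidableEq ι] (p : Ω → ℝ)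
    (h1 : ∑ a, p a = 1) (i : ι) {A : Type*} [AddCommMonoid A] [Module ℝ A] (G : Ω → A) :
    ∑ f : ι → Ω, (∏ k, p (f k)) • G (f i) = ∑ a, p a • G a := by
  classical
  rw [← Equiv.sum_comp (Equiv.funSplitAt i Ω).symm (fun f => (∏ k, p (f k)) • G (f i))]
  rw [Fintype.sum_prod_type]
  refine Finset.sum_congr rfl fun a _ => ?_
  have happ : ∀ (r : {j : ι // j ≠ i} → Ω) (k : ι),
      ((Equiv.funSplitAt i Ω).symm (a, r)) k = if h : k = i then a else r ⟨k, h⟩ := by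
    intro r k
    by_cases h : k = i
    · subst h; simp [Equiv.funSplitAt, Equiv.piSplitAt]
    · simp [Equiv.funSplitAt, Equiv.piSplitAt, h]
  have hprod : ∀ r : {j : ι // j ≠ i} → Ω,
      (∏ k, p (((Equiv.funSplitAt i Ω).symm (a, r)) k)) = p a * ∏ j, p (r j) := by
    intro r
    rw [← Finset.mul_prod_erase Finset.univ _ (Finset.mem_univ i)]
    congr 1
    · rw [happ]; simp
    · rw [Finset.prod_subtype (Finset.univ.erase i)
        (p := fun x => x ≠ i) (by simp) (fun k => p (((Equiv.funSplitAt i Ω).symm (a, r)) k))]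
      refine Finset.prod_congr rfl fun j _ => ?_
      rw [happ, dif_neg j.2]
  calc ∑ r : {j : ι // j ≠ i} → Ω, (∏ k, p (((Equiv.funSplitAt i Ω).symm (a, r)) k))
        • G (((Equiv.funSplitAt i Ω).symm (a, r)) i)
      = ∑ r : {j : ι // j ≠ i} → Ω, (p a * ∏ j, p (r j)) • G a := by
        refine Finset.sum_congr rfl fun r _ => ?_
        rw [hprod r, happ, dif_pos rfl]
    _ = (∑ r : {j : ι // j ≠ i} → Ω, p a * ∏ j, p (r j)) • G a := by rw [Finset.sum_smul]
    _ = p a • G a := by rw [← Finset.mul_sum, sum_pi_prod p h1, mul_one]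

lemma marg2 {ι Ω : Type*} [Fintype ι] [Fintype Ω] [DecidableEq ι] (p : Ω → ℝ)
    (h1 : ∑ a, p a = 1) (i j : ι) (hij : j ≠ i) {A : Type*} [AddCommMonoid A] [Module ℝ A]
    (G : Ω → Ω → A) :
    ∑ f : ι → Ω, (∏ k, p (f k)) • G (f i) (f j) = ∑ a, ∑ b, (p a * p b) • G a b := by
  classical
  rw [← Equiv.sum_comp (Equiv.funSplitAt i Ω).symm (fun f => (∏ k, p (f k)) • G (f i) (f j))]
  rw [Fintype.sum_prod_type]
  refine Finset.sum_congr rfl fun a _ => ?_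
  have happ : ∀ (r : {k : ι // k ≠ i} → Ω) (k : ι),
      ((Equiv.funSplitAt i Ω).symm (a, r)) k = if h : k = i then a else r ⟨k, h⟩ := by
    intro r k
    by_cases h : k = i
    · subst h; simp [Equiv.funSplitAt, Equiv.piSplitAt]
    · simp [Equiv.funSplitAt, Equiv.piSplitAt, h]
  have hprod : ∀ r : {k : ι // k ≠ i} → Ω,
      (∏ k, p (((Equiv.funSplitAt i Ω).symm (a, r)) k)) = p a * ∏ k', p (r k') := by
    intro r
    rw [← Finset.mul_prod_erase Finset.univ _ (Finset.mem_univ i)]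
    congr 1
    · rw [happ]; simp
    · rw [Finset.prod_subtype (Finset.univ.erase i)
        (p := fun x => x ≠ i) (by simp) (fun k => p (((Equiv.funSplitAt i Ω).symm (a, r)) k))]
      refine Finset.prod_congr rfl fun k _ => ?_
      rw [happ, dif_neg k.2]
  calc ∑ r : {k : ι // k ≠ i} → Ω, (∏ k, p (((Equiv.funSplitAt i Ω).symm (a, r)) k))
        • G (((Equiv.funSplitAt i Ω).symm (a, r)) i) (((Equiv.funSplitAt i Ω).symm (a, r)) j)
      = ∑ r : {k : ι // k ≠ i} → Ω, p a • ((∏ k', p (r k')) • G a (r ⟨j, hij⟩)) := by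
        refine Finset.sum_congr rfl fun r _ => ?_
        rw [hprod r, happ, happ, dif_pos rfl, dif_neg hij, mul_smul]
    _ = p a • ∑ r : {k : ι // k ≠ i} → Ω, (∏ k', p (r k')) • G a (r ⟨j, hij⟩) := by
        rw [Finset.smul_sum]
    _ = p a • ∑ b, p b • G a b := by
        exact congrArg (fun x => p a • x) (marg1 p h1 (⟨j, hij⟩ : {k // k ≠ i}) (G a))
    _ = ∑ b, (p a * p b) • G a b := by rw [Finset.smul_sum]; simp [mul_smul]

variable {d : ℕ}

lemma rsmul (r : ℝ) (A : Matrix (Fin d) (Fin d) ℂ) : r • A = (r : ℂ) • A := by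
  ext i j; simp [Complex.real_smul]

lemma psd_rsmul {A : Matrix (Fin d) (Fin d) ℂ} (hA : A.PosSemidef) {r : ℝ} (hr : 0 ≤ r) :
    ((r : ℂ) • A).PosSemidef := by
  constructor
  · show ((r:ℂ) • A)ᴴ = (r:ℂ) • A
    rw [Matrix.conjTranspose_smul, hA.1.eq, Complex.star_def, Complex.conj_ofReal]
  · intro x
    exact (hA.smul (Complex.zero_le_real.mpr hr)).2 x

section ExpSq
variable {Ω : Type*} [Fintype Ω]

lemma exp_sq (p : Ω → ℝ) (hp : IsProbDist p) (Xv : Ω → Matrix (Fin d) (Fin d) ℂ)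
    (M S2 : Matrix (Fin d) (Fin d) ℂ) (hM : M = ∑ ω, (p ω : ℂ) • Xv ω)
    (hS2 : S2 = ∑ ω, (p ω : ℂ) • ((Xv ω - M) * (Xv ω - M))) (n : ℕ) :
    ∑ f : Fin n → Ω, (∏ k, p (f k)) • ((∑ i, (Xv (f i) - M)) * (∑ i, (Xv (f i) - M)))
      = (n : ℝ) • S2 := by
  have h1 : ∑ a, p a = 1 := hp.2
  have h0 : ∑ a, p a • (Xv a - M) = (0 : Matrix (Fin d) (Fin d) ℂ) := by
    have e1 : ∑ a, p a • (Xv a - M) = (∑ a, (p a : ℂ) • Xv a) - (∑ a, ((p a : ℝ) : ℂ)) • M := by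
      rw [Finset.sum_smul, ← Finset.sum_sub_distrib]
      exact Finset.sum_congr rfl fun a _ => by rw [rsmul, smul_sub]
    have e2 : (∑ a, ((p a : ℝ) : ℂ)) = 1 := by exact_mod_cast h1
    rw [e1, ← hM, e2, one_smul, sub_self]
  have hS2' : ∑ a, p a • ((Xv a - M) * (Xv a - M)) = S2 := by
    rw [hS2]; exact Finset.sum_congr rfl fun a _ => rsmul _ _
  have hexpand : ∀ f : Fin n → Ω,
      (∏ k, p (f k)) • ((∑ i, (Xv (f i) - M)) * (∑ i, (Xv (f i) - M)))
      = ∑ i, ∑ j, (∏ k, p (f k)) • ((Xv (f i) - M) * (Xv (f j) - M)) := by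
    intro f
    rw [Finset.sum_mul_sum, Finset.smul_sum]
    exact Finset.sum_congr rfl fun i _ => Finset.smul_sum
  rw [Finset.sum_congr rfl fun f _ => hexpand f, Finset.sum_comm]
  have hsw : ∀ i : Fin n,
      ∑ f : Fin n → Ω, ∑ j, (∏ k, p (f k)) • ((Xv (f i) - M) * (Xv (f j) - M))
      = ∑ j, ∑ f : Fin n → Ω, (∏ k, p (f k)) • ((Xv (f i) - M) * (Xv (f j) - M)) :=
    fun i => Finset.sum_comm
  rw [Finset.sum_congr rfl fun i _ => hsw i]
  have key : ∀ i j : Fin n,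
      (∑ f : Fin n → Ω, (∏ k, p (f k)) • ((Xv (f i) - M) * (Xv (f j) - M)))
      = if j = i then S2 else 0 := by
    intro i j
    by_cases h : j = i
    · subst h
      rw [if_pos rfl, marg1 p h1 j (fun a => (Xv a - M) * (Xv a - M)), hS2']
    · rw [if_neg h, marg2 p h1 i j h (fun a b => (Xv a - M) * (Xv b - M))]
      have hz : ∀ a, ∑ b, (p a * p b) • ((Xv a - M) * (Xv b - M))
          = (0 : Matrix (Fin d) (Fin d) ℂ) := by
        intro a
        have e : ∀ b, (p a * p b) • ((Xv a - M) * (Xv b - M))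
            = p a • ((Xv a - M) * (p b • (Xv b - M))) := by
          intro b; rw [mul_smul]; congr 1; exact (mul_smul_comm _ _ _).symm
        rw [Finset.sum_congr rfl fun b _ => e b, ← Finset.smul_sum, ← Finset.mul_sum, h0,
          mul_zero, smul_zero]
      rw [Finset.sum_congr rfl fun a _ => hz a]
      simp
  rw [Finset.sum_congr rfl fun i _ => Finset.sum_congr rfl fun j _ => key i j]
  simp only [Finset.sum_ite_eq', Finset.mem_univ, if_true]
  rw [Finset.sum_const, Finset.card_univ, Fintype.card_fin, Nat.cast_smul_eq_nsmul]
end ExpSq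

lemma prOf_le_of_bound {α : Type*} [Fintype α] (q : α → ℝ) (hq : ∀ a, 0 ≤ q a)
    (s : Set α) (f : α → ℝ) (hf0 : ∀ a, 0 ≤ f a) {c : ℝ} (hc : 0 < c)
    (hfs : ∀ a ∈ s, c ≤ f a) :
    prOf q s ≤ (1/c) * ∑ a, q a * f a := by
  classical
  rw [prOf, Finset.mul_sum]
  apply Finset.sum_le_sum
  intro a _
  rw [Set.indicator_apply]
  split_ifs with h
  · have h1 := hfs a h
    have h2 : q a * c ≤ q a * f a := mul_le_mul_of_nonneg_left h1 (hq a)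
    rw [one_div, inv_mul_eq_div, le_div_iff₀ hc]
    linarith
  · exact mul_nonneg (by positivity) (mul_nonneg (hq a) (hf0 a))
theorem stmt12 {d : ℕ} {Ω : Type*} [Fintype Ω] (p : Ω → ℝ) (hp : IsProbDist p)
    (Xv : Ω → Matrix (Fin d) (Fin d) ℂ) (hX : ∀ ω, (Xv ω).IsHermitian)
    (M : Matrix (Fin d) (Fin d) ℂ) (hM : M = ∑ ω, (p ω : ℂ) • Xv ω)
    (S2 : Matrix (Fin d) (Fin d) ℂ)
    (hS2 : S2 = ∑ ω, (p ω : ℂ) • ((Xv ω - M) * (Xv ω - M)))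
    (Δ : Matrix (Fin d) (Fin d) ℂ) (hΔ : Δ.PosDef) (n : ℕ) (hn : 0 < n) :
    prOf (prodP p n) {ω | ¬ ((((n:ℂ)⁻¹ • ∑ i, Xv (ω i)) - (M - Δ)).PosSemidef ∧
          ((M + Δ) - ((n:ℂ)⁻¹ • ∑ i, Xv (ω i))).PosSemidef)}
      ≤ (1 / n) * (S2 * (Δ^2)⁻¹).trace.re ∧
    prOf (prodP p n) {ω | ¬ (((∑ i, Xv (ω i)) -
            ((n:ℂ) • M - ((Real.sqrt n : ℝ) : ℂ) • Δ)).PosSemidef ∧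
          (((n:ℂ) • M + ((Real.sqrt n : ℝ) : ℂ) • Δ) - ∑ i, Xv (ω i)).PosSemidef)}
      ≤ (S2 * (Δ^2)⁻¹).trace.re := by
  have hnR : (0:ℝ) < (n:ℝ) := Nat.cast_pos.mpr hn
  have hnC : (n:ℂ) ≠ 0 := Nat.cast_ne_zero.mpr hn.ne'
  set W : (Fin n → Ω) → Matrix (Fin d) (Fin d) ℂ :=
    fun f => (∑ i, Xv (f i)) - (n:ℂ) • M with hWdef
  have hWf : ∀ f, W f = (∑ i, Xv (f i)) - (n:ℂ) • M := fun f => rfl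
  have hMH : M.IsHermitian := by
    show Mᴴ = M
    rw [hM, Matrix.conjTranspose_sum]
    exact Finset.sum_congr rfl fun ω _ => by
      rw [Matrix.conjTranspose_smul, Complex.star_def, Complex.conj_ofReal, (hX ω).eq]
  have hWH : ∀ f, (W f).IsHermitian := by
    intro f
    show (W f)ᴴ = W f
    rw [hWf, Matrix.conjTranspose_sub, Matrix.conjTranspose_sum, Matrix.conjTranspose_smul]
    congr 1
    · exact Finset.sum_congr rfl fun i _ => (hX (f i)).eq
    · rw [hMH.eq]; norm_cast
  have hWsum : ∀ f : Fin n → Ω, ∑ i, (Xv (f i) - M) = W f := by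
    intro f
    rw [hWf, Finset.sum_sub_distrib, Finset.sum_const, Finset.card_univ, Fintype.card_fin,
      Nat.cast_smul_eq_nsmul]
  set F : (Fin n → Ω) → ℝ := fun f => ((W f * W f * (Δ⁻¹ * Δ⁻¹)).trace).re with hFdef
  have hpt := fun f => pointwise_bounds (W f) Δ (hWH f) hΔ
  have hF0 : ∀ f, 0 ≤ F f := fun f => (hpt f).1
  have hq : ∀ f, 0 ≤ prodP p n f := fun f => Finset.prod_nonneg fun i _ => hp.1 _
  set T : ℝ := ((S2 * (Δ⁻¹ * Δ⁻¹)).trace).re with hTdef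
  have hE := exp_sq p hp Xv M S2 hM hS2 n
  rw [Finset.sum_congr rfl (fun f _ => by rw [hWsum f])] at hE
  have hsum : ∑ f : Fin n → Ω, prodP p n f * F f = (n:ℝ) * T := by
    have hlin : ∑ f : Fin n → Ω, prodP p n f * F f
        = (((∑ f : Fin n → Ω, (∏ k, p (f k)) • (W f * W f)) * (Δ⁻¹ * Δ⁻¹)).trace).re := by
      rw [Finset.sum_mul, Matrix.trace_sum, Complex.re_sum]
      refine Finset.sum_congr rfl fun f _ => ?_
      rw [Matrix.smul_mul, Matrix.trace_smul, Complex.smul_re, smul_eq_mul]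
      rfl
    rw [hlin, hE, Matrix.smul_mul, Matrix.trace_smul, Complex.smul_re, smul_eq_mul]
  have hΔ2 : (Δ^2)⁻¹ = Δ⁻¹ * Δ⁻¹ := by rw [pow_two, Matrix.mul_inv_rev]
  constructor
  · have hfs : ∀ f ∈ {ω : Fin n → Ω | ¬ ((((n:ℂ)⁻¹ • ∑ i, Xv (ω i)) - (M - Δ)).PosSemidef ∧
        ((M + Δ) - ((n:ℂ)⁻¹ • ∑ i, Xv (ω i))).PosSemidef)}, ((n:ℝ))^2 ≤ F f := by
      intro f hf
      by_contra hlt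
      push_neg at hlt
      obtain ⟨hA, hB⟩ := (hpt f).2 (n:ℝ) hnR hlt
      rw [Complex.ofReal_natCast] at hA hB
      refine hf ⟨?_, ?_⟩
      · have h3 := psd_rsmul hA (r := ((n:ℝ))⁻¹) (by positivity)
        rw [Complex.ofReal_inv, Complex.ofReal_natCast] at h3
        have hid : (n:ℂ)⁻¹ • (W f + (n:ℂ) • Δ)
            = ((n:ℂ)⁻¹ • ∑ i, Xv (f i)) - (M - Δ) := by
          rw [hWf, smul_add, smul_sub, smul_smul, smul_smul, inv_mul_cancel₀ hnC,
            one_smul, one_smul]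
          abel
        rwa [hid] at h3
      · have h3 := psd_rsmul hB (r := ((n:ℝ))⁻¹) (by positivity)
        rw [Complex.ofReal_inv, Complex.ofReal_natCast] at h3
        have hid : (n:ℂ)⁻¹ • ((n:ℂ) • Δ - W f)
            = (M + Δ) - ((n:ℂ)⁻¹ • ∑ i, Xv (f i)) := by
          rw [hWf, smul_sub, smul_sub, smul_smul, inv_mul_cancel₀ hnC, one_smul,
            smul_smul, inv_mul_cancel₀ hnC, one_smul]
          abel
        rwa [hid] at h3
    have hb := prOf_le_of_bound (prodP p n) hq _ F hF0 (c := ((n:ℝ))^2) (by positivity) hfs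
    rw [hΔ2]
    calc prOf (prodP p n) _ ≤ (1/((n:ℝ)^2)) * ∑ f : Fin n → Ω, prodP p n f * F f := hb
      _ = (1/((n:ℝ)^2)) * ((n:ℝ) * T) := by rw [hsum]
      _ = (1/(n:ℝ)) * T := by field_simp
  · have hfs : ∀ f ∈ {ω : Fin n → Ω | ¬ (((∑ i, Xv (ω i)) -
        ((n:ℂ) • M - ((Real.sqrt n : ℝ) : ℂ) • Δ)).PosSemidef ∧
        (((n:ℂ) • M + ((Real.sqrt n : ℝ) : ℂ) • Δ) - ∑ i, Xv (ω i)).PosSemidef)},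
        (n:ℝ) ≤ F f := by
      intro f hf
      by_contra hlt
      push_neg at hlt
      rw [← Real.sq_sqrt (le_of_lt hnR)] at hlt
      obtain ⟨hA, hB⟩ := (hpt f).2 (Real.sqrt n) (Real.sqrt_pos.mpr hnR) hlt
      refine hf ⟨?_, ?_⟩
      · have hid : W f + ((Real.sqrt n : ℝ) : ℂ) • Δ
            = (∑ i, Xv (f i)) - ((n:ℂ) • M - ((Real.sqrt n : ℝ) : ℂ) • Δ) := by
          rw [hWf]; abel
        rwa [hid] at hA
      · have hid : ((Real.sqrt n : ℝ) : ℂ) • Δ - W f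
            = ((n:ℂ) • M + ((Real.sqrt n : ℝ) : ℂ) • Δ) - ∑ i, Xv (f i) := by
          rw [hWf]; abel
        rwa [hid] at hB
    have hb := prOf_le_of_bound (prodP p n) hq _ F hF0 (c := (n:ℝ)) hnR hfs
    rw [hΔ2]
    calc prOf (prodP p n) _ ≤ (1/(n:ℝ)) * ∑ f : Fin n → Ω, prodP p n f * F f := hb
      _ = (1/(n:ℝ)) * ((n:ℝ) * T) := by rw [hsum]
      _ = T := by field_simp
end

section
/- Let Y be a discrete random variable with values in the selfadjoint operators on a d-dimensional complex Hilbert space, B a selfadjoint operator, and T an operator with T*T positive definite. Then Pr{ Y ≰ B } ≤ Tr( 𝔼 exp(T·Y·T* − T·B·T*) ), where exp is the operator exponential. -/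
/-!
For each outcome, the indicator of `Y ≰ B` is dominated by `tr exp(T (Y - B) T*)`. The trace of
the exponential of a Hermitian matrix is the sum of the exponentials of its eigenvalues, so it is
nonnegative, and it is at least `1` as soon as the matrix is not negative semidefinite, since then
it has a nonnegative eigenvalue. Congruence by the invertible `T` preserves the Loewner order, so
`Y ≰ B` makes `T Y T* - T B T*` not negative semidefinite. Averaging over the outcomes gives the
bound.
-/

open scoped BigOperators
open ComplexOrder
open scoped Matrix

namespace Matrix

section Hermitian

variable {n : Type*} [Fintype n] [DecidableEq n] {A : Matrix n n ℂ}

lemma IsHermitian.trace_exp (hA : A.IsHermitian) :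
    (NormedSpace.exp A).trace = ∑ i, (Real.exp (hA.eigenvalues i) : ℂ) := by
  set U : Matrix n n ℂ := (hA.eigenvectorUnitary : Matrix n n ℂ)
  have hU_inv : star U = U⁻¹ :=
    (inv_eq_left_inv (Unitary.star_mul_self_of_mem hA.eigenvectorUnitary.2)).symm
  conv_lhs => rw [hA.spectral_theorem, Unitary.conjStarAlgAut_apply, hU_inv,
    exp_conj _ _ Unitary.isUnit_coe, trace_mul_cycle, ← hU_inv, Unitary.coe_star_mul_self,
    one_mul, exp_diagonal, trace_diagonal]
  simp [Pi.coe_exp, ← Complex.exp_eq_exp_ℂ, Complex.ofReal_exp]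

lemma IsHermitian.re_trace_exp (hA : A.IsHermitian) :
    (NormedSpace.exp A).trace.re = ∑ i, Real.exp (hA.eigenvalues i) := by
  simp only [hA.trace_exp, Complex.re_sum, Complex.ofReal_re]

lemma IsHermitian.re_trace_exp_nonneg (hA : A.IsHermitian) :
    0 ≤ (NormedSpace.exp A).trace.re := by
  rw [hA.re_trace_exp]
  exact Finset.sum_nonneg fun i _ ↦ (Real.exp_pos _).le

lemma IsHermitian.posSemidef_neg_of_eigenvalues_nonpos (hA : A.IsHermitian)
    (h : ∀ i, hA.eigenvalues i ≤ 0) : (-A).PosSemidef := by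
  rw [hA.spectral_theorem, ← map_neg, Unitary.conjStarAlgAut_apply,
    IsUnit.posSemidef_star_right_conjugate_iff Unitary.isUnit_coe, diagonal_neg,
    posSemidef_diagonal_iff]
  intro i
  simpa using (RCLike.ofReal_nonpos (K := ℂ)).mpr (h i)

lemma IsHermitian.one_le_re_trace_exp (hA : A.IsHermitian) (h : ¬(-A).PosSemidef) :
    1 ≤ (NormedSpace.exp A).trace.re := by
  obtain ⟨i, hi⟩ : ∃ i, 0 ≤ hA.eigenvalues i := by
    by_contra! hneg
    exact h (hA.posSemidef_neg_of_eigenvalues_nonpos fun i ↦ (hneg i).le)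
  calc (1 : ℝ) ≤ Real.exp (hA.eigenvalues i) := Real.one_le_exp hi
    _ ≤ ∑ j, Real.exp (hA.eigenvalues j) :=
      Finset.single_le_sum (fun j _ ↦ (Real.exp_pos _).le) (Finset.mem_univ i)
    _ = (NormedSpace.exp A).trace.re := hA.re_trace_exp.symm

end Hermitian

section Congruence

variable {𝕜 n : Type*} [RCLike 𝕜] [Fintype n] [DecidableEq n] {T : Matrix n n 𝕜}

lemma PosDef.isUnit_of_conjTranspose_mul_self (hT : (Tᴴ * T).PosDef) : IsUnit T := by
  rw [isUnit_iff_isUnit_det]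
  refine isUnit_of_mul_isUnit_right (x := Tᴴ.det) ?_
  rw [← det_mul]
  exact (isUnit_iff_isUnit_det _).mp hT.isUnit

lemma posSemidef_conj_sub_conj_iff (hT : IsUnit T) {A B : Matrix n n 𝕜} :
    (T * A * Tᴴ - T * B * Tᴴ).PosSemidef ↔ (A - B).PosSemidef := by
  rw [← Matrix.sub_mul, ← Matrix.mul_sub, ← star_eq_conjTranspose,
    IsUnit.posSemidef_star_right_conjugate_iff hT]

end Congruence

end Matrix

theorem stmt13 {d : ℕ} {Ω : Type*} [Fintype Ω] (p : Ω → ℝ) (hp : IsProbDist p)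
    (Yv : Ω → Matrix (Fin d) (Fin d) ℂ) (hY : ∀ ω, (Yv ω).IsHermitian)
    (B : Matrix (Fin d) (Fin d) ℂ) (hB : B.IsHermitian)
    (T : Matrix (Fin d) (Fin d) ℂ) (hT : (Tᴴ * T).PosDef) :
    prOf p {ω | ¬ (B - Yv ω).PosSemidef}
      ≤ (∑ ω, (p ω : ℂ) • NormedSpace.exp (T * Yv ω * Tᴴ - T * B * Tᴴ)).trace.re := by
  have hTu := hT.isUnit_of_conjTranspose_mul_self
  rw [Matrix.trace_sum, Complex.re_sum]
  refine Finset.sum_le_sum fun ω _ ↦ ?_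
  have hH := (Matrix.isHermitian_mul_mul_conjTranspose T (hY ω)).sub
    (Matrix.isHermitian_mul_mul_conjTranspose T hB)
  rw [Matrix.trace_smul, smul_eq_mul, Complex.re_ofReal_mul]
  refine Set.indicator_apply_le' (fun hω ↦ ?_) fun _ ↦
    mul_nonneg (hp.1 ω) hH.re_trace_exp_nonneg
  exact le_mul_of_one_le_right (hp.1 ω)
    (hH.one_le_re_trace_exp (by rwa [neg_sub, Matrix.posSemidef_conj_sub_conj_iff hTu]))
end

section
/- Let Γ = (𝒱, ℰ) be a quantum hypergraph with d = dim 𝒱 ≥ 2, and let P be a probability distribution on ℰ such that ∑_{E∈ℰ} P(E)·E ≥ μ𝟙 for some μ > 0. Then there exists a covering of Γ, i.e. a finite family E₁, …, E_k of edges from ℰ (repetitions allowed) with ∑_{i=1}^{k} Eᵢ ≥ 𝟙, of size k ≤ 1 + 8·(ln 2 · log d)/μ. -/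
open scoped BigOperators
open ComplexOrder
open scoped Matrix

namespace QHC19
open Matrix

variable {d : ℕ}

noncomputable def qf (A : Matrix (Fin d) (Fin d) ℂ) (x : Fin d → ℂ) : ℝ :=
  (dotProduct (star x) (A *ᵥ x)).re

noncomputable def n2 (x : Fin d → ℂ) : ℝ := (dotProduct (star x) x).re

lemma qf_nonneg {A : Matrix (Fin d) (Fin d) ℂ} (h : A.PosSemidef) (x : Fin d → ℂ) :
    0 ≤ qf A x := by
  have := h.re_dotProduct_nonneg x
  simpa [qf, RCLike.re_to_complex] using this

lemma qf_one (x : Fin d → ℂ) : qf 1 x = n2 x := by simp [qf, n2]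

lemma n2_nonneg (x : Fin d → ℂ) : 0 ≤ n2 x := by
  have := qf_nonneg (Matrix.PosSemidef.one (n := Fin d) (R := ℂ)) x
  simpa [qf_one] using this

lemma n2_eq_sum (x : Fin d → ℂ) : n2 x = ∑ i, Complex.normSq (x i) := by
  simp [n2, dotProduct, Complex.re_sum, Complex.normSq_apply]

lemma qf_sub (A B : Matrix (Fin d) (Fin d) ℂ) (x : Fin d → ℂ) :
    qf (A - B) x = qf A x - qf B x := by
  simp [qf, Matrix.sub_mulVec, dotProduct_sub]


lemma qf_add (A B : Matrix (Fin d) (Fin d) ℂ) (x : Fin d → ℂ) :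
    qf (A + B) x = qf A x + qf B x := by
  simp [qf, Matrix.add_mulVec, dotProduct_add]

lemma qf_smul_mat (t : ℝ) (A : Matrix (Fin d) (Fin d) ℂ) (x : Fin d → ℂ) :
    qf (((t:ℝ):ℂ) • A) x = t * qf A x := by
  simp only [qf, Matrix.smul_mulVec, dotProduct_smul, smul_eq_mul, Complex.mul_re]
  simp [Complex.ofReal_re, Complex.ofReal_im]


lemma qf_zero (x : Fin d → ℂ) : qf 0 x = 0 := by
  simp [qf]

lemma qf_fsum {κ : Type*} [Fintype κ] (A : κ → Matrix (Fin d) (Fin d) ℂ) (x : Fin d → ℂ) :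
    qf (∑ j, A j) x = ∑ j, qf (A j) x := by
  classical
  let φ : Matrix (Fin d) (Fin d) ℂ →+ ℝ :=
    ⟨⟨fun M => qf M x, qf_zero x⟩, fun M N => qf_add M N x⟩
  exact map_sum φ A Finset.univ

lemma qf_le_of_psd {A B : Matrix (Fin d) (Fin d) ℂ} (h : (B - A).PosSemidef) (x : Fin d → ℂ) :
    qf A x ≤ qf B x := by
  have := qf_nonneg h x
  rw [qf_sub] at this; linarith

lemma ip_re_symm (u v : Fin d → ℂ) :
    (dotProduct (star u) v).re = (dotProduct (star v) u).re := by
  rw [Matrix.star_dotProduct]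
  simp

lemma herm_move {A : Matrix (Fin d) (Fin d) ℂ} (hA : A.IsHermitian) (u v : Fin d → ℂ) :
    dotProduct (star (A *ᵥ u)) v = dotProduct (star u) (A *ᵥ v) := by
  rw [Matrix.star_mulVec, hA.eq, ← Matrix.dotProduct_mulVec]

lemma qf_expand (A : Matrix (Fin d) (Fin d) ℂ) (hA : A.IsHermitian) (u v : Fin d → ℂ) (t : ℝ) :
    qf A ((t:ℂ) • u + v)
      = qf A u * t^2 + 2 * (dotProduct (star u) (A *ᵥ v)).re * t + qf A v := by
  have hsym : (dotProduct (star v) (A *ᵥ u)).re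
      = (dotProduct (star u) (A *ᵥ v)).re := by
    rw [Matrix.star_dotProduct]
    conv_rhs => rw [← hA.eq]
    rw [Matrix.star_mulVec, ← Matrix.dotProduct_mulVec]
    simp
  simp only [qf, Matrix.mulVec_add, Matrix.mulVec_smul, star_add, star_smul,
    dotProduct_add, add_dotProduct, dotProduct_smul, smul_dotProduct]
  simp only [Complex.add_re, Complex.mul_re]
  simp [Complex.ofReal_re, Complex.ofReal_im, RCLike.star_def, Complex.conj_ofReal]
  rw [hsym]; ring

lemma cs_re {A : Matrix (Fin d) (Fin d) ℂ} (hA : A.PosSemidef) (u v : Fin d → ℂ) :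
    (dotProduct (star u) (A *ᵥ v)).re ≤ Real.sqrt (qf A u) * Real.sqrt (qf A v) := by
  set a := qf A u with ha
  set c := qf A v with hc
  set b := (dotProduct (star u) (A *ᵥ v)).re with hb
  have key : ∀ t : ℝ, 0 ≤ a * (t*t) + (2*b) * t + c := by
    intro t
    have h1 := qf_nonneg hA ((t:ℂ) • u + v)
    rw [qf_expand A hA.isHermitian u v t] at h1
    nlinarith [h1]
  have hd : discrim a (2*b) c ≤ 0 := discrim_le_zero key
  rw [discrim] at hd
  have hb2 : b^2 ≤ a * c := by nlinarith
  calc b ≤ |b| := le_abs_self b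
    _ = Real.sqrt (b^2) := (Real.sqrt_sq_eq_abs b).symm
    _ ≤ Real.sqrt (a*c) := Real.sqrt_le_sqrt hb2
    _ = Real.sqrt a * Real.sqrt c := Real.sqrt_mul (qf_nonneg hA u) c

lemma n2_mulVec (A : Matrix (Fin d) (Fin d) ℂ) (x : Fin d → ℂ) :
    n2 (A *ᵥ x) = qf (Aᴴ * A) x := by
  simp only [n2, qf, Matrix.star_mulVec, ← Matrix.mulVec_mulVec, ← Matrix.dotProduct_mulVec]

lemma n2_sub_expand (u v : Fin d → ℂ) :
    n2 (u - v) = n2 u - 2 * (dotProduct (star u) v).re + n2 v := by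
  have h : (dotProduct (star v) u).re = (dotProduct (star u) v).re := by
    rw [Matrix.star_dotProduct]; simp
  simp only [n2, star_sub, dotProduct_sub, sub_dotProduct, Complex.sub_re]
  rw [h]; ring

lemma n2_smul_real (t : ℝ) (x : Fin d → ℂ) : n2 ((t:ℂ) • x) = t^2 * n2 x := by
  simp only [n2, star_smul, dotProduct_smul, smul_dotProduct]
  simp [RCLike.star_def, Complex.conj_ofReal, smul_smul, Complex.mul_re, Complex.ofReal_re,
    Complex.ofReal_im]
  ring

lemma qf_smul_vec (A : Matrix (Fin d) (Fin d) ℂ) (t : ℝ) (x : Fin d → ℂ) :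
    qf A ((t:ℂ) • x) = t^2 * qf A x := by
  simp only [qf, star_smul, Matrix.mulVec_smul, dotProduct_smul, smul_dotProduct]
  simp [RCLike.star_def, Complex.conj_ofReal, smul_smul, Complex.mul_re, Complex.ofReal_re,
    Complex.ofReal_im]
  ring

lemma trace_re_nonneg {A : Matrix (Fin d) (Fin d) ℂ} (h : A.PosSemidef) :
    0 ≤ A.trace.re := by
  have h1 : ∀ i, 0 ≤ (A i i).re := by
    intro i
    have := qf_nonneg h (Pi.single i 1)
    simpa [qf, Matrix.mulVec_single, dotProduct, Pi.single_apply] using this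
  rw [Matrix.trace]
  simp only [Complex.re_sum, Matrix.diag]
  exact Finset.sum_nonneg fun i _ => h1 i

open scoped MatrixOrder in
lemma psd_sqrt_ex {A : Matrix (Fin d) (Fin d) ℂ} (hA : A.PosSemidef) :
    ∃ S : Matrix (Fin d) (Fin d) ℂ, S.PosSemidef ∧ S * S = A :=
  ⟨CFC.sqrt A, Matrix.nonneg_iff_posSemidef.mp (CFC.sqrt_nonneg A),
    CFC.sqrt_mul_sqrt_self A (Matrix.nonneg_iff_posSemidef.mpr hA)⟩

lemma trace_mul_re_nonneg {A B : Matrix (Fin d) (Fin d) ℂ} (hA : A.PosSemidef)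
    (hB : B.PosSemidef) : 0 ≤ (A * B).trace.re := by
  obtain ⟨R, hRpsd, hs⟩ := psd_sqrt_ex hA
  have h1 : (A * B).trace = (R * B * R).trace := by
    conv_lhs => rw [← hs]
    rw [Matrix.mul_assoc, Matrix.trace_mul_comm, Matrix.mul_assoc]
  rw [h1]
  have h2 : (R * B * R).PosSemidef := by
    have := hB.mul_mul_conjTranspose_same R
    rwa [hRpsd.isHermitian.eq] at this
  exact trace_re_nonneg h2

lemma smul_psd {A : Matrix (Fin d) (Fin d) ℂ} (c : ℝ) (hc : 0 ≤ c) (hA : A.PosSemidef) :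
    ((c:ℂ) • A).PosSemidef := by
  refine Matrix.PosSemidef.of_dotProduct_mulVec_nonneg ?_ ?_
  · unfold Matrix.IsHermitian
    rw [Matrix.conjTranspose_smul, hA.isHermitian.eq, RCLike.star_def, Complex.conj_ofReal]
  · intro x
    have h0 := hA.dotProduct_mulVec_nonneg x
    have heq : dotProduct (star x) (((c:ℂ) • A) *ᵥ x)
        = (c:ℂ) * dotProduct (star x) (A *ᵥ x) := by
      rw [Matrix.smul_mulVec, dotProduct_smul, smul_eq_mul]
    rw [heq]
    rw [Complex.le_def] at h0 ⊢
    simp only [Complex.mul_re, Complex.mul_im, Complex.ofReal_re, Complex.ofReal_im,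
      Complex.zero_re, Complex.zero_im] at *
    constructor
    · nlinarith [h0.1]
    · rw [← h0.2]; ring

lemma sub_sq_psd {A : Matrix (Fin d) (Fin d) ℂ} (hA : A.PosSemidef)
    (h1 : ((1:Matrix (Fin d) (Fin d) ℂ) - A).PosSemidef) : (A - A * A).PosSemidef := by
  obtain ⟨S, hSpsd, hS0⟩ := psd_sqrt_ex hA
  have hS : S * S = A := hS0
  have hSH : Sᴴ = S := hSpsd.isHermitian.eq
  have key : A - A * A = S * (1 - A) * Sᴴ := by
    rw [hSH, Matrix.mul_sub, Matrix.mul_one, Matrix.sub_mul, hS]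
    congr 1
    rw [← hS]
    simp only [Matrix.mul_assoc]
  rw [key]
  exact h1.mul_mul_conjTranspose_same S

lemma normSq_dotProduct_le (v x : Fin d → ℂ) :
    Complex.normSq (dotProduct v x)
      ≤ (∑ j, Complex.normSq (v j)) * ∑ j, Complex.normSq (x j) := by
  have h1 : ‖dotProduct v x‖ ≤ ∑ j, ‖v j‖ * ‖x j‖ := by
    rw [dotProduct]
    refine (norm_sum_le _ _).trans ?_
    simp [norm_mul]
  have h2 : (∑ j, ‖v j‖ * ‖x j‖)^2
      ≤ (∑ j, ‖v j‖ ^ 2) * ∑ j, ‖x j‖ ^ 2 :=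
    Finset.sum_mul_sq_le_sq_mul_sq _ _ _
  have h3 : Complex.normSq (dotProduct v x) = ‖dotProduct v x‖ ^ 2 :=
    (Complex.sq_norm _).symm
  rw [h3]
  calc ‖dotProduct v x‖ ^ 2
      ≤ (∑ j, ‖v j‖ * ‖x j‖)^2 := by
        apply pow_le_pow_left₀ (norm_nonneg _) h1
    _ ≤ (∑ j, ‖v j‖ ^ 2) * ∑ j, ‖x j‖ ^ 2 := h2
    _ = (∑ j, Complex.normSq (v j)) * ∑ j, Complex.normSq (x j) := by
        simp [Complex.sq_norm]

lemma n2_mulVec_le_trace (A : Matrix (Fin d) (Fin d) ℂ) (x : Fin d → ℂ) :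
    n2 (A *ᵥ x) ≤ (Aᴴ * A).trace.re * n2 x := by
  have htr : (Aᴴ * A).trace.re = ∑ j, ∑ i, Complex.normSq (A i j) := by
    simp [Matrix.trace, Matrix.diag, Matrix.mul_apply, Matrix.conjTranspose_apply,
      Complex.re_sum, Complex.normSq_apply]
  rw [htr, n2_eq_sum, n2_eq_sum]
  have hrow : ∀ i, Complex.normSq ((A *ᵥ x) i)
      ≤ (∑ j, Complex.normSq (A i j)) * ∑ j, Complex.normSq (x j) := by
    intro i
    exact normSq_dotProduct_le (fun j => A i j) x
  calc ∑ i, Complex.normSq ((A *ᵥ x) i)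
      ≤ ∑ i, (∑ j, Complex.normSq (A i j)) * ∑ j, Complex.normSq (x j) :=
        Finset.sum_le_sum fun i _ => hrow i
    _ = (∑ j, ∑ i, Complex.normSq (A i j)) * ∑ j, Complex.normSq (x j) := by
        rw [← Finset.sum_mul]
        rw [Finset.sum_comm]

lemma sqrt_comb {u v U V : ℝ} (hu : 0 ≤ u) (hv : 0 ≤ v) (hU : 0 ≤ U) (hV : 0 ≤ V) :
    Real.sqrt u * Real.sqrt v + Real.sqrt U * Real.sqrt V
      ≤ Real.sqrt (u+U) * Real.sqrt (v+V) := by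
  rw [← Real.sqrt_mul hu, ← Real.sqrt_mul hU, ← Real.sqrt_mul (by linarith : (0:ℝ) ≤ u + U)]
  have h1 : (Real.sqrt (u*v) + Real.sqrt (U*V))^2 ≤ (u+U)*(v+V) := by
    have e1 := Real.sq_sqrt (mul_nonneg hu hv)
    have e2 := Real.sq_sqrt (mul_nonneg hU hV)
    have e3 : Real.sqrt (u*v) * Real.sqrt (U*V) = Real.sqrt (u*V) * Real.sqrt (U*v) := by
      rw [← Real.sqrt_mul (mul_nonneg hu hv), ← Real.sqrt_mul (mul_nonneg hu hV)]
      congr 1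
      ring
    have e4 := Real.sq_sqrt (mul_nonneg hu hV)
    have e5 := Real.sq_sqrt (mul_nonneg hU hv)
    nlinarith [sq_nonneg (Real.sqrt (u*V) - Real.sqrt (U*v)), Real.sqrt_nonneg (u*v),
      Real.sqrt_nonneg (U*V)]
  have h2 : 0 ≤ Real.sqrt (u*v) + Real.sqrt (U*V) :=
    add_nonneg (Real.sqrt_nonneg _) (Real.sqrt_nonneg _)
  calc Real.sqrt (u*v) + Real.sqrt (U*V)
      = Real.sqrt ((Real.sqrt (u*v) + Real.sqrt (U*V))^2) := (Real.sqrt_sq h2).symm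
    _ ≤ Real.sqrt ((u+U)*(v+V)) := Real.sqrt_le_sqrt h1


section Lists
variable {ι : Type*}

noncomputable def prodL (B : ι → Matrix (Fin d) (Fin d) ℂ) :
    List ι → Matrix (Fin d) (Fin d) ℂ
  | [] => 1
  | i :: t => prodL B t * B i

lemma prodL_append_single (B : ι → Matrix (Fin d) (Fin d) ℂ) (l : List ι) (i : ι) :
    prodL B (l ++ [i]) = B i * prodL B l := by
  induction l with
  | nil => simp [prodL]
  | cons a t ih =>
    show prodL B (t ++ [i]) * B a = _
    rw [ih, Matrix.mul_assoc]
    rfl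

variable (B : ι → Matrix (Fin d) (Fin d) ℂ)
  (hBpsd : ∀ i, (B i).PosSemidef)
  (hBc : ∀ i, ((1:Matrix (Fin d) (Fin d) ℂ) - B i).PosSemidef)

include hBpsd hBc

lemma step_n2 (i : ι) (x : Fin d → ℂ) :
    n2 (B i *ᵥ x) ≤ n2 x - qf (1 - B i) x := by
  have hsq : (B i - B i * B i).PosSemidef := sub_sq_psd (hBpsd i) (hBc i)
  have h1 : n2 (B i *ᵥ x) = qf (B i * B i) x := by
    rw [n2_mulVec, (hBpsd i).isHermitian.eq]
  have h2 : qf (B i * B i) x ≤ qf (B i) x := qf_le_of_psd hsq x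
  have h3 : qf (1 - B i) x = n2 x - qf (B i) x := by
    rw [qf_sub, qf_one]
  linarith

lemma contr : ∀ (l : List ι) (x : Fin d → ℂ), n2 (prodL B l *ᵥ x) ≤ n2 x := by
  intro l
  induction l with
  | nil => intro x; simp [prodL]
  | cons i t ih =>
    intro x
    have h0 : prodL B (i::t) *ᵥ x = prodL B t *ᵥ (B i *ᵥ x) := by
      rw [Matrix.mulVec_mulVec]; rfl
    rw [h0]
    refine (ih (B i *ᵥ x)).trans ?_
    have := step_n2 B hBpsd hBc i x
    have hq := qf_nonneg (hBc i) x
    linarith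

lemma key_ineq : ∀ (l : List ι) (φ ψ : Fin d → ℂ),
    (dotProduct (star φ) ψ).re - (dotProduct (star (prodL B l *ᵥ φ)) ψ).re
      ≤ Real.sqrt ((l.map (fun i => qf (1 - B i) ψ)).sum)
        * Real.sqrt (n2 φ - n2 (prodL B l *ᵥ φ)) := by
  intro l
  induction l with
  | nil =>
    intro φ ψ
    simp [prodL]
  | cons i t ih =>
    intro φ ψ
    have h0 : prodL B (i::t) *ᵥ φ = prodL B t *ᵥ (B i *ᵥ φ) := by
      rw [Matrix.mulVec_mulVec]; rfl
    set φ' := B i *ᵥ φ with hφ'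
    have hsplit :
        (dotProduct (star φ) ψ).re - (dotProduct (star (prodL B (i::t) *ᵥ φ)) ψ).re
        = (dotProduct (star φ) ((1 - B i) *ᵥ ψ)).re
          + ((dotProduct (star φ') ψ).re
             - (dotProduct (star (prodL B t *ᵥ φ')) ψ).re) := by
      rw [h0]
      have hmove : dotProduct (star φ') ψ = dotProduct (star φ) (B i *ᵥ ψ) :=
        herm_move (hBpsd i).isHermitian φ ψ
      rw [hmove]
      have hsub : dotProduct (star φ) ((1 - B i) *ᵥ ψ)
          = dotProduct (star φ) ψ - dotProduct (star φ) (B i *ᵥ ψ) := by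
        rw [Matrix.sub_mulVec, dotProduct_sub, Matrix.one_mulVec]
      rw [hsub]
      simp only [Complex.sub_re]
      ring
    rw [hsplit]
    have hterm1 : (dotProduct (star φ) ((1 - B i) *ᵥ ψ)).re
        ≤ Real.sqrt (qf (1 - B i) φ) * Real.sqrt (qf (1 - B i) ψ) := cs_re (hBc i) φ ψ
    have hterm2 := ih φ' ψ
    set u := qf (1 - B i) φ
    set v := qf (1 - B i) ψ
    set U := n2 φ' - n2 (prodL B t *ᵥ φ')
    set V := (t.map (fun j => qf (1 - B j) ψ)).sum
    have hu : 0 ≤ u := qf_nonneg (hBc i) φ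
    have hv : 0 ≤ v := qf_nonneg (hBc i) ψ
    have hU : 0 ≤ U := by
      have := contr B hBpsd hBc t φ'
      simp only [U]; linarith
    have hV : 0 ≤ V := by
      apply List.sum_nonneg
      intro x hx
      obtain ⟨j, _, rfl⟩ := List.mem_map.mp hx
      exact qf_nonneg (hBc j) ψ
    have hcomb : Real.sqrt u * Real.sqrt v + Real.sqrt U * Real.sqrt V
        ≤ Real.sqrt (u + U) * Real.sqrt (v + V) := sqrt_comb hu hv hU hV
    have hUU : u + U ≤ n2 φ - n2 (prodL B (i::t) *ᵥ φ) := by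
      have := step_n2 B hBpsd hBc i φ
      rw [h0]
      simp only [U]
      linarith
    have hmono : Real.sqrt (u + U) * Real.sqrt (v + V)
        ≤ Real.sqrt (n2 φ - n2 (prodL B (i::t) *ᵥ φ)) * Real.sqrt (v + V) := by
      apply mul_le_mul_of_nonneg_right (Real.sqrt_le_sqrt hUU) (Real.sqrt_nonneg _)
    have hsum : ((i::t).map (fun j => qf (1 - B j) ψ)).sum = v + V := by
      simp [V, v]
    rw [hsum]
    have hVsqrt : Real.sqrt U * Real.sqrt V = Real.sqrt V * Real.sqrt U := by ring
    calc (dotProduct (star φ) ((1 - B i) *ᵥ ψ)).re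
          + ((dotProduct (star φ') ψ).re
             - (dotProduct (star (prodL B t *ᵥ φ')) ψ).re)
        ≤ Real.sqrt u * Real.sqrt v + Real.sqrt V * Real.sqrt U := by
          refine add_le_add hterm1 ?_
          exact hterm2
      _ = Real.sqrt u * Real.sqrt v + Real.sqrt U * Real.sqrt V := by ring
      _ ≤ Real.sqrt (u + U) * Real.sqrt (v + V) := hcomb
      _ ≤ Real.sqrt (n2 φ - n2 (prodL B (i::t) *ᵥ φ)) * Real.sqrt (v + V) := hmono
      _ = Real.sqrt (v + V) * Real.sqrt (n2 φ - n2 (prodL B (i::t) *ᵥ φ)) := by ring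


lemma chain (l : List ι) (ψ : Fin d → ℂ) (hψ : n2 ψ = 1)
    (htr : ((prodL B l * (prodL B l)ᴴ).trace).re ≤ 25/49) :
    (1:ℝ)/7 ≤ (l.map (fun i => qf (1 - B i) ψ)).sum := by
  by_contra hcon
  push_neg at hcon
  set M := prodL B l with hM
  set m := M *ᵥ ψ with hm
  set s := (l.map (fun i => qf (1 - B i) ψ)).sum with hs
  have hs0 : 0 ≤ s := by
    apply List.sum_nonneg
    intro x hx
    obtain ⟨j, _, rfl⟩ := List.mem_map.mp hx
    exact qf_nonneg (hBc j) ψ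
  have hDnn : n2 m ≤ 1 := by
    have := contr B hBpsd hBc l ψ
    rw [hψ] at this
    exact this
  have hmnn : 0 ≤ n2 m := n2_nonneg m
  set a := 1 - (dotProduct (star m) ψ).re with ha
  have hkey : a ≤ Real.sqrt s * Real.sqrt (1 - n2 m) := by
    have := key_ineq B hBpsd hBc l ψ ψ
    rw [hψ] at this
    have hnψ : (dotProduct (star ψ) ψ).re = 1 := hψ
    rw [hnψ] at this
    exact this
  have hsym : (dotProduct (star m) ψ).re = (dotProduct (star ψ) m).re :=
    ip_re_symm m ψ
  have hD2a : 1 - n2 m ≤ 2 * a := by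
    have h0 : 0 ≤ n2 (ψ - m) := n2_nonneg _
    rw [n2_sub_expand, hψ] at h0
    rw [ha, hsym]
    linarith
  have ha2s : a ≤ 2 * s := by
    rcases le_or_gt a 0 with h | h
    · linarith
    · have hsq : a^2 ≤ s * (1 - n2 m) := by
        have h2 : (Real.sqrt s * Real.sqrt (1 - n2 m))^2 = s * (1 - n2 m) := by
          rw [mul_pow, Real.sq_sqrt hs0, Real.sq_sqrt (by linarith : (0:ℝ) ≤ 1 - n2 m)]
        nlinarith [hkey]
      nlinarith
  have hre : 5/7 < (dotProduct (star ψ) m).re := by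
    rw [← hsym]
    have : a < 2/7 := by linarith
    linarith
  have hcs : (dotProduct (star ψ) m).re ≤ Real.sqrt (n2 m) := by
    have h1 := cs_re (Matrix.PosSemidef.one (n := Fin d) (R := ℂ)) ψ m
    rw [Matrix.one_mulVec, qf_one, qf_one, hψ, Real.sqrt_one, one_mul] at h1
    exact h1
  have hn2m : 25/49 < n2 m := by
    have h1 : (5/7:ℝ) < Real.sqrt (n2 m) := lt_of_lt_of_le hre hcs
    have h2 : ((5:ℝ)/7)^2 < (Real.sqrt (n2 m))^2 := by
      apply pow_lt_pow_left₀ h1 (by norm_num) (by norm_num)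
    rw [Real.sq_sqrt hmnn] at h2
    linarith [h2]
  have htrace : n2 m ≤ 25/49 := by
    have h1 := n2_mulVec_le_trace M ψ
    rw [hψ, mul_one] at h1
    have h2 : (Mᴴ * M).trace = (M * Mᴴ).trace := Matrix.trace_mul_comm _ _
    rw [h2] at h1
    exact h1.trans htr
  linarith


lemma exists_good [Fintype ι] (P : ι → ℝ) (hP0 : ∀ i, 0 ≤ P i) (hP1 : ∑ i, P i = 1)
    (β : ℝ)
    (hG : (((β:ℂ) • (1:Matrix (Fin d) (Fin d) ℂ)) - ∑ i, (P i:ℂ) • (B i * B i)).PosSemidef)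
    (W : Matrix (Fin d) (Fin d) ℂ) (hW : W.PosSemidef) :
    ∃ i, ((B i * W * B i).trace).re ≤ β * W.trace.re := by
  classical
  set S := ∑ i, (P i:ℂ) • (B i * B i) with hS
  have havg : ∑ i, P i * ((B i * B i * W).trace).re = ((S * W).trace).re := by
    rw [hS, Finset.sum_mul]
    have : ∀ i, ((P i:ℂ) • (B i * B i)) * W = (P i:ℂ) • (B i * B i * W) := by
      intro i; rw [Matrix.smul_mul]
    simp_rw [this, Matrix.trace_sum, Matrix.trace_smul, Complex.re_sum]
    congr 1; funext i
    rw [smul_eq_mul, Complex.mul_re]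
    simp [Complex.ofReal_re, Complex.ofReal_im]
  have hge : 0 ≤ ((((β:ℂ) • (1:Matrix (Fin d) (Fin d) ℂ)) - S) * W).trace.re :=
    trace_mul_re_nonneg hG hW
  have hexp : ((((β:ℂ) • (1:Matrix (Fin d) (Fin d) ℂ)) - S) * W).trace.re
      = β * W.trace.re - ((S * W).trace).re := by
    rw [Matrix.sub_mul, Matrix.smul_mul, Matrix.one_mul, Matrix.trace_sub, Matrix.trace_smul]
    rw [Complex.sub_re, smul_eq_mul, Complex.mul_re]
    simp [Complex.ofReal_re, Complex.ofReal_im]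
  have hsum : ∑ i, P i * ((B i * B i * W).trace).re ≤ β * W.trace.re := by
    rw [havg]; linarith
  by_contra hcon
  push_neg at hcon
  have hcyc : ∀ i, ((B i * W * B i).trace) = ((B i * B i * W).trace) := by
    intro i
    rw [Matrix.mul_assoc, Matrix.trace_mul_comm, Matrix.mul_assoc, Matrix.trace_mul_comm]
  have hcon' : ∀ i, β * W.trace.re < ((B i * B i * W).trace).re := by
    intro i
    have := hcon i
    rw [hcyc i] at this
    exact this
  obtain ⟨i0, hi0⟩ : ∃ i, 0 < P i := by
    by_contra hall
    push_neg at hall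
    have : ∑ i, P i = 0 := Finset.sum_eq_zero fun i _ => le_antisymm (hall i) (hP0 i)
    rw [hP1] at this; norm_num at this
  have hlt : ∑ i, P i * (β * W.trace.re) < ∑ i, P i * ((B i * B i * W).trace).re := by
    apply Finset.sum_lt_sum
    · intro i _
      exact mul_le_mul_of_nonneg_left (le_of_lt (hcon' i)) (hP0 i)
    · exact ⟨i0, Finset.mem_univ i0, by
        exact mul_lt_mul_of_pos_left (hcon' i0) hi0⟩
  rw [← Finset.sum_mul, hP1, one_mul] at hlt
  linarith

lemma greedy [Fintype ι] (P : ι → ℝ) (hP0 : ∀ i, 0 ≤ P i) (hP1 : ∑ i, P i = 1)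
    (hBh : ∀ i, (B i).IsHermitian)
    (β : ℝ) (hβ : 0 ≤ β)
    (hG : (((β:ℂ) • (1:Matrix (Fin d) (Fin d) ℂ)) - ∑ i, (P i:ℂ) • (B i * B i)).PosSemidef) :
    ∀ k : ℕ, ∃ l : List ι, l.length = k ∧
      ((prodL B l * (prodL B l)ᴴ).trace).re ≤ (d:ℝ) * β^k := by
  intro k
  induction k with
  | zero =>
    refine ⟨[], rfl, ?_⟩
    simp [prodL, Matrix.trace_one]
  | succ k ih =>
    obtain ⟨l, hlen, hle⟩ := ih
    set M := prodL B l with hM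
    set W := M * Mᴴ with hW
    have hWpsd : W.PosSemidef := Matrix.posSemidef_self_mul_conjTranspose M
    obtain ⟨i, hi⟩ := exists_good B hBpsd hBc P hP0 hP1 β hG W hWpsd
    refine ⟨l ++ [i], by simp [hlen], ?_⟩
    have hnew : prodL B (l ++ [i]) = B i * M := prodL_append_single B l i
    have hform : prodL B (l ++ [i]) * (prodL B (l ++ [i]))ᴴ = B i * W * B i := by
      rw [hnew, Matrix.conjTranspose_mul, (hBh i).eq, hW]
      rw [Matrix.mul_assoc, Matrix.mul_assoc, Matrix.mul_assoc]
    rw [hform]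
    calc ((B i * W * B i).trace).re ≤ β * W.trace.re := hi
      _ ≤ β * ((d:ℝ) * β^k) := mul_le_mul_of_nonneg_left hle hβ
      _ = (d:ℝ) * β^(k+1) := by ring

end Lists

lemma psd_sum {κ : Type*} [Fintype κ] (f : κ → Matrix (Fin d) (Fin d) ℂ)
    (hf : ∀ i, (f i).PosSemidef) : (∑ i, f i).PosSemidef := by
  classical
  refine Finset.sum_induction f _ (fun a b ha hb => ha.add hb) Matrix.PosSemidef.zero
    (fun i _ => hf i)

lemma list_sum_fin {α : Type*} {M : Type*} [AddCommMonoid M] (l : List α) (f : α → M) :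
    ∑ j : Fin l.length, f (l.get j) = (l.map f).sum := by
  induction l with
  | nil => simp
  | cons a t ih => simp [Fin.sum_univ_succ, ih]



lemma numeric {dd : ℕ} (hd : 2 ≤ dd) {μ : ℝ} (hμ : 0 < μ) (hμ1 : μ ≤ 1) :
    (dd:ℝ) * (1 - 13/49*μ)^(⌈(8:ℝ) * Real.log dd / μ⌉₊) ≤ 25/49 := by
  set k := ⌈(8:ℝ) * Real.log dd / μ⌉₊ with hk
  have hd1 : (1:ℝ) < dd := by exact_mod_cast Nat.lt_of_lt_of_le Nat.one_lt_two hd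
  have hld : 0 < Real.log dd := Real.log_pos hd1
  have hkx : (8:ℝ) * Real.log dd / μ ≤ k := Nat.le_ceil _
  have hμk : 8 * Real.log dd ≤ μ * k := by
    rw [div_le_iff₀ hμ] at hkx
    linarith
  have hβ0 : 0 ≤ 1 - 13/49*μ := by nlinarith
  have hβe : 1 - 13/49*μ ≤ Real.exp (-(13/49*μ)) := by
    have := Real.add_one_le_exp (-(13/49*μ))
    linarith
  have hpow : (1 - 13/49*μ)^k ≤ Real.exp (-(13/49*μ))^k := pow_le_pow_left₀ hβ0 hβe k
  rw [← Real.exp_nat_mul] at hpow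
  have hexp2 : Real.exp (k * -(13/49*μ)) ≤ Real.exp (-(104/49) * Real.log dd) := by
    apply Real.exp_le_exp.mpr
    nlinarith
  have hdpos : (0:ℝ) < dd := by linarith
  have hdeq : (dd:ℝ) = Real.exp (Real.log dd) := (Real.exp_log hdpos).symm
  have hmain : (dd:ℝ) * (1 - 13/49*μ)^k ≤ Real.exp (-(55/49) * Real.log dd) := by
    calc (dd:ℝ) * (1 - 13/49*μ)^k
        ≤ (dd:ℝ) * Real.exp (-(104/49) * Real.log dd) := by
          apply mul_le_mul_of_nonneg_left (hpow.trans hexp2) hdpos.le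
      _ = Real.exp (Real.log dd + -(104/49) * Real.log dd) := by
          rw [Real.exp_add, ← hdeq]
      _ = Real.exp (-(55/49) * Real.log dd) := by ring_nf
  refine hmain.trans ?_
  have hlog2 : Real.log 2 ≤ Real.log dd := by
    apply Real.log_le_log (by norm_num)
    exact_mod_cast hd
  have h1 : Real.exp (-(55/49) * Real.log dd) ≤ Real.exp (-(55/49) * Real.log 2) := by
    apply Real.exp_le_exp.mpr
    nlinarith
  refine h1.trans ?_
  rw [← Real.le_log_iff_exp_le (by norm_num : (0:ℝ) < 25/49)]
  have h49 : Real.log (((49:ℝ)/25)^(49:ℕ)) ≤ Real.log ((2:ℝ)^(55:ℕ)) := by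
    apply Real.log_le_log (by positivity)
    rw [div_pow, div_le_iff₀ (by positivity)]
    norm_num
  rw [Real.log_pow, Real.log_pow] at h49
  push_cast at h49
  have hlog4925 : Real.log (25/49) = - Real.log (49/25) := by
    rw [← Real.log_inv]
    norm_num
  rw [hlog4925]
  nlinarith [h49]

end QHC19

theorem stmt18 {d : ℕ} (hd : 2 ≤ d) {ι : Type*} [Fintype ι] [Nonempty ι]
    (Ed : ι → Matrix (Fin d) (Fin d) ℂ)
    (hE : ∀ i, (Ed i).PosSemidef ∧ (1 - Ed i).PosSemidef)
    (P : ι → ℝ) (hP : IsProbDist P) (μ : ℝ) (hμ : 0 < μ)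
    (hlow : ((∑ i, (P i : ℂ) • Ed i) - (μ:ℂ) • 1).PosSemidef) :
    ∃ (k : ℕ) (sel : Fin k → ι),
      ((∑ i, Ed (sel i)) - 1).PosSemidef ∧
      (k:ℝ) ≤ 1 + 8 * (Real.log 2 * Real.logb 2 d) / μ := by
  classical
  open QHC19 in
  set B : ι → Matrix (Fin d) (Fin d) ℂ := fun i => 1 - ((1/7:ℝ):ℂ) • Ed i with hB
  have hEpsd : ∀ i, (Ed i).PosSemidef := fun i => (hE i).1
  have hEc : ∀ i, ((1:Matrix (Fin d) (Fin d) ℂ) - Ed i).PosSemidef := fun i => (hE i).2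
  have hBpsd : ∀ i, (B i).PosSemidef := by
    intro i
    have hid : B i = ((6/7:ℝ):ℂ) • (1:Matrix (Fin d) (Fin d) ℂ)
        + ((1/7:ℝ):ℂ) • ((1:Matrix (Fin d) (Fin d) ℂ) - Ed i) := by
      rw [hB]
      push_cast
      module
    rw [hid]
    exact (QHC19.smul_psd _ (by norm_num) Matrix.PosSemidef.one).add
      (QHC19.smul_psd _ (by norm_num) (hEc i))
  have hBc : ∀ i, ((1:Matrix (Fin d) (Fin d) ℂ) - B i).PosSemidef := by
    intro i
    have hid : (1:Matrix (Fin d) (Fin d) ℂ) - B i = ((1/7:ℝ):ℂ) • Ed i := by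
      rw [hB]
      exact sub_sub_cancel _ _
    rw [hid]
    exact QHC19.smul_psd _ (by norm_num) (hEpsd i)
  set T : Matrix (Fin d) (Fin d) ℂ := ∑ i, (P i : ℂ) • Ed i with hT
  have hPsum : ∑ i, ((P i : ℝ):ℂ) = 1 := by
    rw [← Complex.ofReal_sum, hP.2, Complex.ofReal_one]
  -- μ ≤ 1
  have hones : ((1:Matrix (Fin d) (Fin d) ℂ) - T).PosSemidef := by
    have hid : (1:Matrix (Fin d) (Fin d) ℂ) - T = ∑ i, (P i : ℂ) • ((1:Matrix (Fin d) (Fin d) ℂ) - Ed i) := by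
      simp_rw [smul_sub]
      rw [Finset.sum_sub_distrib, ← Finset.sum_smul, hPsum, one_smul, hT]
    rw [hid]
    exact QHC19.psd_sum _ fun i => QHC19.smul_psd _ (hP.1 i) (hEc i)
  have htr1 : ((1:Matrix (Fin d) (Fin d) ℂ)).trace.re = (d:ℝ) := by
    rw [Matrix.trace_one]
    simp
  have htrT_ub : T.trace.re ≤ (d:ℝ) := by
    have h0 := QHC19.trace_re_nonneg hones
    rw [Matrix.trace_sub, Complex.sub_re, htr1] at h0
    linarith
  have htrμ : ((μ:ℂ) • (1:Matrix (Fin d) (Fin d) ℂ)).trace.re = μ * d := by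
    rw [Matrix.trace_smul, Matrix.trace_one, smul_eq_mul]
    simp [Complex.mul_re]
  have htrT_lb : μ * d ≤ T.trace.re := by
    have h0 := QHC19.trace_re_nonneg hlow
    rw [Matrix.trace_sub, Complex.sub_re] at h0
    rw [htrμ] at h0
    linarith
  have hdpos : (0:ℝ) < d := by
    have : (2:ℝ) ≤ d := by exact_mod_cast hd
    linarith
  have hμ1 : μ ≤ 1 := by nlinarith
  -- the decay matrix inequality
  set β : ℝ := 1 - 13/49*μ with hβ
  set T2 : Matrix (Fin d) (Fin d) ℂ := ∑ i, (P i : ℂ) • (Ed i * Ed i) with hT2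
  have hBB : ∀ i, B i * B i
      = 1 - ((2/7:ℝ):ℂ) • Ed i + ((1/49:ℝ):ℂ) • (Ed i * Ed i) := by
    intro i
    rw [hB]
    simp only [Matrix.sub_mul, Matrix.mul_sub, Matrix.mul_one, Matrix.one_mul,
      smul_mul_assoc, mul_smul_comm, smul_smul]
    push_cast
    module
  have hSsum : ∑ i, (P i : ℂ) • (B i * B i)
      = (1:Matrix (Fin d) (Fin d) ℂ) - ((2/7:ℝ):ℂ) • T + ((1/49:ℝ):ℂ) • T2 := by
    simp_rw [hBB, smul_add, smul_sub]
    rw [Finset.sum_add_distrib, Finset.sum_sub_distrib, ← Finset.sum_smul, hPsum, one_smul]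
    congr 1
    · congr 1
      rw [hT, Finset.smul_sum]
      exact Finset.sum_congr rfl fun i _ => (smul_comm _ _ _)
    · rw [hT2, Finset.smul_sum]
      exact Finset.sum_congr rfl fun i _ => (smul_comm _ _ _)
  have hG : (((β:ℝ):ℂ) • (1:Matrix (Fin d) (Fin d) ℂ) - ∑ i, (P i : ℂ) • (B i * B i)).PosSemidef := by
    have hTT2 : T - T2 = ∑ i, (P i : ℂ) • (Ed i - Ed i * Ed i) := by
      rw [hT, hT2, ← Finset.sum_sub_distrib]
      exact Finset.sum_congr rfl fun i _ => (smul_sub _ _ _).symm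
    have hid : ((β:ℝ):ℂ) • (1:Matrix (Fin d) (Fin d) ℂ) - ∑ i, (P i : ℂ) • (B i * B i)
        = ((13/49:ℝ):ℂ) • (T - (μ:ℂ) • 1) + ((1/49:ℝ):ℂ) • (T - T2) := by
      rw [hSsum, hβ]
      push_cast
      module
    rw [hid, hTT2]
    refine Matrix.PosSemidef.add (QHC19.smul_psd _ (by norm_num) ?_)
      (QHC19.smul_psd _ (by norm_num) ?_)
    · exact hlow
    · exact QHC19.psd_sum _ fun i =>
        QHC19.smul_psd _ (hP.1 i) (QHC19.sub_sq_psd (hEpsd i) (hEc i))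
  have hβ0 : 0 ≤ β := by rw [hβ]; nlinarith
  set k0 := ⌈(8:ℝ) * Real.log d / μ⌉₊ with hk0
  obtain ⟨l, hlen, htr⟩ := QHC19.greedy B hBpsd hBc P hP.1 hP.2
    (fun i => (hBpsd i).isHermitian) β hβ0 hG k0
  have htr' : ((QHC19.prodL B l * (QHC19.prodL B l)ᴴ).trace).re ≤ 25/49 := by
    refine htr.trans ?_
    rw [hβ, hk0]
    exact QHC19.numeric hd hμ hμ1
  refine ⟨l.length, l.get, ?_, ?_⟩
  · -- covering property
    set SE : Matrix (Fin d) (Fin d) ℂ := ∑ j : Fin l.length, Ed (l.get j) with hSE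
    have hherm : SE.IsHermitian := by
      show SEᴴ = SE
      rw [hSE, Matrix.conjTranspose_sum]
      exact Finset.sum_congr rfl fun j _ => (hEpsd _).isHermitian.eq
    have hforall : ∀ x, QHC19.n2 x ≤ QHC19.qf SE x := by
      intro x
      rcases eq_or_ne x 0 with rfl | hx0
      · simp [QHC19.n2, QHC19.qf]
      · have hmne : QHC19.n2 x ≠ 0 := by
          intro h0
          apply hx0
          rw [QHC19.n2_eq_sum] at h0
          funext i
          have hterm : ∀ j ∈ Finset.univ, (0:ℝ) ≤ Complex.normSq (x j) :=
            fun j _ => Complex.normSq_nonneg _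
          have := (Finset.sum_eq_zero_iff_of_nonneg hterm).mp h0 i (Finset.mem_univ i)
          exact Complex.normSq_eq_zero.mp this
        have hm : 0 < QHC19.n2 x := lt_of_le_of_ne (QHC19.n2_nonneg x) (Ne.symm hmne)
        set m := QHC19.n2 x with hmdef
        set ψ : Fin d → ℂ := (((Real.sqrt m)⁻¹:ℝ):ℂ) • x with hψdef
        have hψ : QHC19.n2 ψ = 1 := by
          rw [hψdef, QHC19.n2_smul_real, inv_pow, Real.sq_sqrt hm.le, ← hmdef]
          exact inv_mul_cancel₀ hmne
        have hchain := QHC19.chain B hBpsd hBc l ψ hψ htr'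
        have hmapeq : (l.map fun i => QHC19.qf (1 - B i) ψ)
            = l.map fun i => 1/7 * QHC19.qf (Ed i) ψ := by
          apply List.map_congr_left
          intro i _
          have hid : (1:Matrix (Fin d) (Fin d) ℂ) - B i = ((1/7:ℝ):ℂ) • Ed i := by
            rw [hB]; exact sub_sub_cancel _ _
          rw [hid, QHC19.qf_smul_mat]
        rw [hmapeq, List.sum_map_mul_left] at hchain
        have hq1 : 1 ≤ (l.map fun i => QHC19.qf (Ed i) ψ).sum := by linarith
        have hqSE : QHC19.qf SE ψ = (l.map fun i => QHC19.qf (Ed i) ψ).sum := by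
          rw [hSE, QHC19.qf_fsum]
          exact QHC19.list_sum_fin l fun i => QHC19.qf (Ed i) ψ
        have hψge : 1 ≤ QHC19.qf SE ψ := by rw [hqSE]; exact hq1
        have hscale : x = ((Real.sqrt m :ℝ):ℂ) • ψ := by
          rw [hψdef, smul_smul, ← Complex.ofReal_mul,
            mul_inv_cancel₀ (Real.sqrt_ne_zero'.mpr hm)]
          simp
        calc QHC19.n2 x = m := rfl
          _ = (Real.sqrt m)^2 * 1 := by rw [Real.sq_sqrt hm.le, mul_one]
          _ ≤ (Real.sqrt m)^2 * QHC19.qf SE ψ := by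
              apply mul_le_mul_of_nonneg_left hψge (sq_nonneg _)
          _ = QHC19.qf SE (((Real.sqrt m:ℝ):ℂ) • ψ) := (QHC19.qf_smul_vec SE _ ψ).symm
          _ = QHC19.qf SE x := by rw [← hscale]
    refine Matrix.PosSemidef.of_dotProduct_mulVec_nonneg ?_ ?_
    · exact hherm.sub Matrix.isHermitian_one
    · intro x
      set z := dotProduct (star x) ((SE - 1) *ᵥ x) with hz
      have hzim : z.im = 0 := by
        have hherm' : (SE - 1).IsHermitian := hherm.sub Matrix.isHermitian_one
        have h1 : star z = z := by
          calc star z = star (dotProduct (star x) ((SE - 1) *ᵥ x)) := by rw [hz]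
            _ = dotProduct (star ((SE - 1) *ᵥ x)) x := (Matrix.star_dotProduct _ _).symm
            _ = dotProduct (star x) ((SE - 1) *ᵥ x) := QHC19.herm_move hherm' x x
            _ = z := by rw [hz]
        exact Complex.conj_eq_iff_im.mp h1
      have hzre : 0 ≤ z.re := by
        have : z.re = QHC19.qf (SE - 1) x := rfl
        rw [this, QHC19.qf_sub, QHC19.qf_one]
        have := hforall x
        linarith
      rw [Complex.le_def]
      exact ⟨by simpa using hzre, by simpa using hzim.symm⟩
  · -- size bound
    rw [hlen]
    have hlog2pos : (0:ℝ) < Real.log 2 := Real.log_pos (by norm_num)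
    have hlogeq : Real.log 2 * Real.logb 2 (d:ℝ) = Real.log (d:ℝ) := by
      rw [Real.logb]
      field_simp
    have hld : 0 < Real.log (d:ℝ) := Real.log_pos (by exact_mod_cast Nat.lt_of_lt_of_le Nat.one_lt_two hd)
    have hnn : 0 ≤ (8:ℝ) * Real.log d / μ := by positivity
    have := Nat.ceil_lt_add_one hnn
    rw [hlogeq]
    have h2 : (k0:ℝ) ≤ 8 * Real.log d / μ + 1 := le_of_lt (by exact_mod_cast this)
    linarith
end
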